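/- arXiv:1411.2277 — 2 statements merged into one kernel-verified Lean document; each statement's English description precedes it below -/
import Mathlib

section
/- Every bipartite graph G = (V, W) in which every vertex of V has finite degree defines a finitary transversal matroid: the set system on V whose independent sets are the matchable subsets of V is a matroid, and a set is independent if and only if all its finite subsets are. -/
open Set

section Bipartite

variable {V W : Type*}

/-- `m` is a matching in the bipartite graph with edge set `E ⊆ V × W`. -/
def IsBipMatching (E m : Set (V × W)) : Prop :=
  m ⊆ E ∧ ∀ p ∈ m, ∀ q ∈ m, (p.1 = q.1 ∨ p.2 = q.2) → p = q

/-- `I ⊆ V` is matchable in the bipartite graph with edge set `E`. -/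
def Matchable (E : Set (V × W)) (I : Set V) : Prop :=
  ∃ m, IsBipMatching E m ∧ Prod.fst '' m = I

/-- One step along an edge of `F` in the bipartite graph, on vertex type `V ⊕ W`. -/
def bipStep (F : Set (V × W)) : (V ⊕ W) → (V ⊕ W) → Prop := fun a b =>
  match a, b with
  | Sum.inl v, Sum.inr w => (v, w) ∈ F
  | Sum.inr w, Sum.inl v => (v, w) ∈ F
  | _, _ => False

/-- Every connected component of the bipartite graph with edge set `F` is finite. -/
def FiniteComponents (F : Set (V × W)) : Prop :=
  ∀ x : V ⊕ W, {y | Relation.ReflTransGen (bipStep F) x y}.Finite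

/-- `m` is an `m0`-matching: a matching such that every component of `m0 ∪ m` is finite. -/
def IsM0Matching (E m0 m : Set (V × W)) : Prop :=
  IsBipMatching E m ∧ FiniteComponents (m0 ∪ m)

/-- `I` is `m0`-matchable. -/
def M0Matchable (E m0 : Set (V × W)) (I : Set V) : Prop :=
  ∃ m, IsM0Matching E m0 m ∧ Prod.fst '' m = I

/-- `I` is `m0`-matchable onto `W'`. -/
def M0MatchableOnto (E m0 : Set (V × W)) (I : Set V) (W' : Set W) : Prop :=
  ∃ m, IsM0Matching E m0 m ∧ Prod.fst '' m = I ∧ Prod.snd '' m = W'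

end Bipartite

section Star

variable {V : Type*}

/-- The edge set of the converted bimaze of the dimaze `(D, B0)`: the right class is
`{v ∣ v ∉ B0}` (representing `(V \ B0)⋆`) and the edges are the identity matching
together with `v u⋆` for every edge `(u, v)` of `D`. -/
def starEdges (D : V → V → Prop) (B0 : Set V) : Set (V × V) :=
  {p | (p.1 = p.2 ∧ p.2 ∉ B0) ∨ (D p.2 p.1 ∧ p.2 ∉ B0)}

/-- The identity matching of the converted bimaze. -/
def starM0 (B0 : Set V) : Set (V × V) := {p | p.1 = p.2 ∧ p.1 ∉ B0}

end Star

/-!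
By Hall's theorem for families of finite sets (valid for infinite families by compactness),
`I ⊆ V` is matchable iff `#S ≤ #N(S)` for every finite `S ⊆ I`; this condition is visibly
finitary and closed under subsets. For augmentation of finite `I`, `J` with `#I < #J`, suppose
no `e ∈ J \ I` can be added to `I`. Then `N(e) ⊆ N(S)` for some tight `S ⊆ I`, i.e.
`#N(S) ≤ #S`. By submodularity of `S ↦ #N(S)` the tight subsets of `I` are closed under union,
so there is a largest one, `T`, and `J \ (I \ T)` has more than `#T ≥ #N(T)` elements while
its neighbourhood lies in `N(T)`, contradicting Hall's condition for `J`.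
-/

theorem matchable_iff_exists_injective {V W : Type*} {E : Set (V × W)} {I : Set V} :
    Matchable E I ↔ ∃ f : I → W, Function.Injective f ∧ ∀ v : I, ((v : V), f v) ∈ E := by
  constructor
  · rintro ⟨m, ⟨hmE, hm⟩, rfl⟩
    have hpartner : ∀ v : Prod.fst '' m, ∃ w, ((v : V), w) ∈ m := by
      rintro ⟨_, p, hp, rfl⟩
      exact ⟨p.2, hp⟩
    choose f hf using hpartner
    refine ⟨f, fun a b hab => ?_, fun v => hmE (hf v)⟩
    exact Subtype.ext (congrArg Prod.fst (hm _ (hf a) _ (hf b) (Or.inr hab)))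
  · rintro ⟨f, hinj, hf⟩
    refine ⟨Set.range fun v : I => ((v : V), f v), ⟨?_, ?_⟩, ?_⟩
    · rintro _ ⟨v, rfl⟩
      exact hf v
    · rintro _ ⟨a, rfl⟩ _ ⟨b, rfl⟩ hab
      obtain rfl : a = b := hab.elim Subtype.ext (fun h => hinj h)
      rfl
    · rw [← Set.range_comp]
      exact Subtype.range_coe

section Hall

open Finset

variable {V W : Type*} [DecidableEq W]

def HallCondition (N : V → Finset W) (I : Set V) : Prop :=
  ∀ S : Finset V, ↑S ⊆ I → #S ≤ #(S.biUnion N)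

theorem HallCondition.mono {N : V → Finset W} {I J : Set V} (hJ : HallCondition N J)
    (hIJ : I ⊆ J) : HallCondition N I :=
  fun S hS => hJ S (hS.trans hIJ)

theorem hallCondition_of_forall_finite {N : V → Finset W} {I : Set V}
    (h : ∀ J ⊆ I, J.Finite → HallCondition N J) : HallCondition N I :=
  fun S hS => h S hS S.finite_toSet S subset_rfl

theorem hallCondition_iff_exists_injective (N : V → Finset W) (I : Set V) :
    HallCondition N I ↔ ∃ f : I → W, Function.Injective f ∧ ∀ v : I, f v ∈ N v := by
  classical
  rw [← Finset.all_card_le_biUnion_card_iff_exists_injective]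
  constructor
  · intro h s
    have := h (s.image Subtype.val) (by simp)
    rwa [Finset.card_image_of_injective _ Subtype.val_injective, image_biUnion] at this
  · intro h S hS
    have hmap : (S.subtype (· ∈ I)).map (Function.Embedding.subtype _) = S :=
      subtype_map_of_mem fun _ hv => hS hv
    rw [← hmap, card_map, map_eq_image, image_biUnion]
    exact h _

theorem matchable_iff_hallCondition {E : Set (V × W)} {N : V → Finset W}
    (hN : ∀ v w, (v, w) ∈ E ↔ w ∈ N v) {I : Set V} : Matchable E I ↔ HallCondition N I := by
  simp only [matchable_iff_exists_injective, hallCondition_iff_exists_injective, hN]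

variable [DecidableEq V] {N : V → Finset W}

theorem card_biUnion_union_add_card_biUnion_inter_le (N : V → Finset W) (S T : Finset V) :
    #((S ∪ T).biUnion N) + #((S ∩ T).biUnion N) ≤ #(S.biUnion N) + #(T.biUnion N) := by
  rw [union_biUnion, ← card_union_add_card_inter (S.biUnion N)]
  gcongr
  exact Finset.subset_inter (biUnion_subset_biUnion_of_subset_left _ Finset.inter_subset_left)
    (biUnion_subset_biUnion_of_subset_left _ Finset.inter_subset_right)

def IsTight (N : V → Finset W) (S : Finset V) : Prop := #(S.biUnion N) ≤ #S

theorem HallCondition.isTight_union {I : Set V} (hI : HallCondition N I) {S T : Finset V}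
    (hSI : ↑S ⊆ I) (hS : IsTight N S) (hT : IsTight N T) : IsTight N (S ∪ T) := by
  have hsub := card_biUnion_union_add_card_biUnion_inter_le N S T
  have hinter := hI (S ∩ T) (by rw [coe_inter]; exact Set.inter_subset_left.trans hSI)
  have := card_union_add_card_inter S T
  unfold IsTight at *
  omega

theorem HallCondition.exists_isTight_maximum {I : Finset V} (hI : HallCondition N I) :
    ∃ T ⊆ I, IsTight N T ∧ ∀ S ⊆ I, IsTight N S → S ⊆ T := by
  classical
  set tight := I.powerset.filter (IsTight N)
  have hsup : tight.sup id ⊆ I ∧ IsTight N (tight.sup id) := by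
    refine Finset.sup_induction (p := fun T => T ⊆ I ∧ IsTight N T)
      ⟨empty_subset _, by simp [IsTight]⟩
      (fun S hS T hT => ⟨union_subset hS.1 hT.1, hI.isTight_union (coe_subset.2 hS.1) hS.2 hT.2⟩)
      fun S hS => by simpa [tight] using hS
  exact ⟨_, hsup.1, hsup.2, fun S hSI hS => le_sup (f := id) (by simp [tight, hSI, hS])⟩

theorem HallCondition.exists_isTight_of_not_insert {I : Finset V} (hI : HallCondition N I)
    {e : V} (he : ¬HallCondition N ↑(insert e I)) :
    ∃ S ⊆ I, IsTight N S ∧ N e ⊆ S.biUnion N := by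
  simp only [HallCondition, Finset.coe_subset, not_forall, not_le] at he
  obtain ⟨S, hSI, hS⟩ := he
  have heS : e ∈ S := by
    by_contra heS
    exact (hI S (by simpa [Finset.subset_insert_iff_of_notMem heS] using hSI)).not_gt hS
  have hsub : S.erase e ⊆ I := by simpa [← Finset.subset_insert_iff] using hSI
  have hNsub : (S.erase e).biUnion N ⊆ S.biUnion N :=
    biUnion_subset_biUnion_of_subset_left _ (erase_subset e S)
  have hNeq : (S.erase e).biUnion N = S.biUnion N := by
    refine eq_of_subset_of_card_le hNsub ?_
    have := card_erase_add_one heS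
    calc #(S.biUnion N) ≤ #(S.erase e) := by omega
      _ ≤ #((S.erase e).biUnion N) := hI _ (coe_subset.2 hsub)
  refine ⟨S.erase e, hsub, ?_, hNeq ▸ subset_biUnion_of_mem N heS⟩
  have := card_erase_add_one heS
  rw [IsTight, hNeq]
  omega

theorem HallCondition.exists_insert {I J : Finset V} (hI : HallCondition N I)
    (hJ : HallCondition N J) (hlt : #I < #J) :
    ∃ e ∈ J, e ∉ I ∧ HallCondition N ↑(insert e I) := by
  by_contra! hblocked
  obtain ⟨T, hTI, hT, hTmax⟩ := hI.exists_isTight_maximum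
  have hcover : (J \ (I \ T)).biUnion N ⊆ T.biUnion N := by
    refine biUnion_subset.2 fun v hv => ?_
    obtain ⟨hvJ, hvIT⟩ := Finset.mem_sdiff.1 hv
    by_cases hvI : v ∈ I
    · exact subset_biUnion_of_mem N (by simpa [hvI] using hvIT)
    · obtain ⟨S, hSI, hS, hvS⟩ := hI.exists_isTight_of_not_insert (hblocked v hvJ hvI)
      exact hvS.trans (biUnion_subset_biUnion_of_subset_left _ (hTmax S hSI hS))
  have := hJ (J \ (I \ T)) (coe_subset.2 sdiff_subset)
  have := Finset.card_le_card hcover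
  have := le_card_sdiff (I \ T) J
  have := card_sdiff_of_subset hTI
  have := Finset.card_le_card hTI
  unfold IsTight at hT
  omega

end Hall

section Transversal

open Finset

variable {V W : Type*} [DecidableEq V] [DecidableEq W]

def transversalMatroid (N : V → Finset W) : Matroid V :=
  (IndepMatroid.ofFinset Set.univ (fun I => HallCondition N ↑I)
    (show HallCondition N ↑(∅ : Finset V) from fun S hS => by simp_all)
    (fun _ _ hJ hIJ => hJ.mono (coe_subset.2 hIJ))
    (fun _ _ hI hJ hlt => hI.exists_insert hJ hlt)
    (fun _ _ => Set.subset_univ _)).matroid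

theorem transversalMatroid_ground (N : V → Finset W) :
    (transversalMatroid N).E = Set.univ := rfl

theorem transversalMatroid_indep_iff {N : V → Finset W} {I : Set V} :
    (transversalMatroid N).Indep I ↔ HallCondition N I := by
  rw [transversalMatroid, IndepMatroid.matroid_Indep, IndepMatroid.ofFinset_indep']
  exact ⟨fun h S hS => h S hS S subset_rfl, fun h _ hJ => h.mono hJ⟩

instance (N : V → Finset W) : (transversalMatroid N).Finitary :=
  ⟨fun _ h => transversalMatroid_indep_iff.2 <|
    hallCondition_of_forall_finite fun J hJ hfin => transversalMatroid_indep_iff.1 (h J hJ hfin)⟩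

end Transversal

theorem leftLocallyFinite_transversal_finitary {V W : Type*} (E : Set (V × W))
    (hlf : ∀ v : V, {w | (v, w) ∈ E}.Finite) :
    ∃ M : Matroid V, M.E = Set.univ ∧ (∀ I, M.Indep I ↔ Matchable E I) ∧
      (∀ I : Set V, (∀ J ⊆ I, J.Finite → Matchable E J) → Matchable E I) ∧
      M.Finitary := by
  classical
  set N : V → Finset W := fun v => (hlf v).toFinset
  have hN (v : V) (w : W) : (v, w) ∈ E ↔ w ∈ N v := (hlf v).mem_toFinset.symm
  have hindep (I : Set V) : (transversalMatroid N).Indep I ↔ Matchable E I := by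
    rw [transversalMatroid_indep_iff, matchable_iff_hallCondition hN]
  refine ⟨transversalMatroid N, transversalMatroid_ground N, hindep, fun I hI => ?_, inferInstance⟩
  simp only [← hindep] at hI ⊢
  exact Matroid.Finitary.indep_of_forall_finite I hI
end

section
/- Let (D, B_0) be a dimaze that defines a matroid and contains no subdivision of an outgoing comb. Let Q be a linkage from S onto T ⊆ B_0 such that S cannot be linked to any proper subset of T. Then M_L(D, B_0) = M_L(D_1, B_1), where (D_1, B_1) is the Q-shifted dimaze with B_1 = (B_0 \ T) ∪ S. -/
open Set


/-- A finite directed path/walk or a ray, encoded by a vertex function and a length: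
the number of edges, `⊤` for a ray. Only indices `≤ len` are meaningful. -/
structure DiWalk (V : Type*) where
  vtx : ℕ → V
  len : ℕ∞

namespace DiWalk

variable {V : Type*} (w : DiWalk V)

/-- The vertices of the walk. -/
def support : Set V := {v | ∃ i : ℕ, (i : ℕ∞) ≤ w.len ∧ w.vtx i = v}

/-- The directed edges of the walk. -/
def edges : Set (V × V) := {e | ∃ i : ℕ, (i : ℕ∞) + 1 ≤ w.len ∧ e = (w.vtx i, w.vtx (i + 1))}

/-- The initial vertex. -/
def Ini : V := w.vtx 0

/-- The terminal vertex (meaningful for finite walks). -/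
def Ter : V := w.vtx w.len.toNat

/-- `w` is a ray, i.e. one-way infinite. -/
def IsRay : Prop := w.len = ⊤

/-- `w` is a (finite) directed path or a directed ray in the digraph `D`: consecutive
vertices are joined by edges of `D` and no vertex is repeated. -/
def IsPathIn (D : V → V → Prop) : Prop :=
  (∀ i : ℕ, (i : ℕ∞) + 1 ≤ w.len → D (w.vtx i) (w.vtx (i + 1))) ∧
  (∀ i j : ℕ, (i : ℕ∞) ≤ w.len → (j : ℕ∞) ≤ w.len → w.vtx i = w.vtx j → i = j)

end DiWalk

variable {V : Type*}

/-- The vertex set of a family of walks. -/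
def VSet (Q : Set (DiWalk V)) : Set V := ⋃ q ∈ Q, q.support

/-- The edge set of a family of walks. -/
def ESet (Q : Set (DiWalk V)) : Set (V × V) := ⋃ q ∈ Q, q.edges

/-- The set of initial vertices of a family of walks. -/
def IniSet (Q : Set (DiWalk V)) : Set V := DiWalk.Ini '' Q

/-- The set of terminal vertices of the finite members of a family of walks. -/
def TerSet (Q : Set (DiWalk V)) : Set V := {v | ∃ q ∈ Q, ¬ q.IsRay ∧ q.Ter = v}

/-- The members of `Q` are pairwise vertex-disjoint. -/
def PairwiseDisjointWalks (Q : Set (DiWalk V)) : Prop :=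
  ∀ p ∈ Q, ∀ q ∈ Q, p ≠ q → Disjoint p.support q.support

/-- `Q` is a set of pairwise disjoint directed paths or rays in `D`. -/
def IsPathSystem (D : V → V → Prop) (Q : Set (DiWalk V)) : Prop :=
  (∀ q ∈ Q, q.IsPathIn D) ∧ PairwiseDisjointWalks Q

/-- A linkage in the dimaze `(D, B0)`: a set of pairwise disjoint finite directed paths
ending in `B0`. -/
def IsLinkage (D : V → V → Prop) (B0 : Set V) (Q : Set (DiWalk V)) : Prop :=
  IsPathSystem D Q ∧ ∀ q ∈ Q, ¬ q.IsRay ∧ q.Ter ∈ B0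

/-- `I` is linkable to `B0` in `(D, B0)`. -/
def Linkable (D : V → V → Prop) (B0 : Set V) (I : Set V) : Prop :=
  ∃ Q, IsLinkage D B0 Q ∧ IniSet Q = I

/-- `I` is linkable onto `B0`: some linkage from `I` has terminal vertex set exactly `B0`. -/
def LinkableOnto (D : V → V → Prop) (B0 : Set V) (I : Set V) : Prop :=
  ∃ Q, IsLinkage D B0 Q ∧ IniSet Q = I ∧ TerSet Q = B0

/-- `B0` is a set of sinks of `D`. -/
def IsDimaze (D : V → V → Prop) (B0 : Set V) : Prop := ∀ b ∈ B0, ∀ v, ¬ D b v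

/-- `v` is the centre of a linking fan: infinitely many non-trivial directed paths to `B0`
from `v`, pairwise meeting only in `v`. -/
def IsFanCentre (D : V → V → Prop) (B0 : Set V) (v : V) : Prop :=
  ∃ P : Set (DiWalk V), P.Infinite ∧
    (∀ p ∈ P, p.IsPathIn D ∧ ¬ p.IsRay ∧ 1 ≤ p.len ∧ p.Ini = v ∧ p.Ter ∈ B0) ∧
    (∀ p ∈ P, ∀ q ∈ P, p ≠ q → p.support ∩ q.support ⊆ {v})

/-- The ray `R` is the spine of an outgoing comb with teeth ending in `B0`: there are
infinitely many pairwise disjoint non-trivial paths from distinct vertices of `R` to `B0`,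
each meeting `R` exactly in its initial vertex. -/
def IsSpine (D : V → V → Prop) (B0 : Set V) (R : DiWalk V) : Prop :=
  R.IsPathIn D ∧ R.IsRay ∧
  ∃ P : Set (DiWalk V), P.Infinite ∧
    (∀ p ∈ P, p.IsPathIn D ∧ ¬ p.IsRay ∧ 1 ≤ p.len ∧ p.Ini ∈ R.support ∧ p.Ter ∈ B0 ∧
      p.support ∩ R.support = {p.Ini}) ∧
    PairwiseDisjointWalks P

/-- `(D, B0)` contains no subdivision of an outgoing comb. -/
def COFree (D : V → V → Prop) (B0 : Set V) : Prop := ¬ ∃ R, IsSpine D B0 R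

/-- `(D, B0)` contains no subdivision of a linking fan. -/
def FanFree (D : V → V → Prop) (B0 : Set V) : Prop := ¬ ∃ v, IsFanCentre D B0 v

/-- A topological path in `(D, B0)`. -/
def IsTopPath (D : V → V → Prop) (B0 : Set V) (w : DiWalk V) : Prop :=
  w.IsPathIn D ∧
    ((¬ w.IsRay ∧ w.Ter ∈ B0) ∨ (¬ w.IsRay ∧ IsFanCentre D B0 w.Ter) ∨ IsSpine D B0 w)

/-- `I` is topologically linkable in `(D, B0)`. -/
def TopLinkable (D : V → V → Prop) (B0 : Set V) (I : Set V) : Prop :=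
  ∃ Q : Set (DiWalk V), (∀ q ∈ Q, IsTopPath D B0 q) ∧ PairwiseDisjointWalks Q ∧ IniSet Q = I

/-- The digraph of the `Q`-shifted dimaze: every edge of `Q` is reversed, and every other
edge `(v, u)` is replaced by `(Q⃗(v), u)`, where `Q⃗(v)` is `v` if `v ∉ V(Q)` and otherwise
the successor of `v` on its path in `Q`. -/
def shiftedDigraph {V : Type*} (D : V → V → Prop) (EQ : Set (V × V)) (VQ : Set V) :
    V → V → Prop :=
  fun a u => (u, a) ∈ EQ ∨ ∃ v, D v u ∧ (v, u) ∉ EQ ∧ ((v ∉ VQ ∧ a = v) ∨ (v, a) ∈ EQ)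

/-!
Composing a linkage `P` of the `Q`-shifted dimaze with `Q` gives a linkage of `(D, B0)` from
the same vertices: follow `Q`, except that an edge of `Q` traversed backwards by `P` is
cancelled and a step of `P` along a shifted edge `(Q⃗(x), u)` is replaced by the original edge
`(x, u)`. Every vertex then has at most one successor and one predecessor, so the walks from
the initial vertices of `P` are disjoint paths of `D`. When `P` has no rays such a walk cannot
go on forever: it would either meet infinitely many paths of `Q`, which then form the teeth of
an outgoing comb, or eventually follow a ray of `P`. Hence every set linkable in `(D₁, B₁)` is
linkable in `(D, B0)`.

Conversely, `(D, B0)` is, up to loops, the shift of `(D₁, B₁)` along the reversed linkage, so it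
suffices that `(D₁, B₁)` contains no outgoing comb either. Composing the spine of such a comb
with `Q`, the walks from `S` and from the start of the spine all end in `T` (a walk following
the spine forever would carry a comb of `(D, B0)` on its tail), so `S` links onto a proper
subset of `T`.
-/

namespace DiWalk

variable {D D' : V → V → Prop} {w p q : DiWalk V} {X : Set V} {i j m : ℕ}

lemma coe_toNat_len (h : ¬ w.IsRay) : (w.len.toNat : ℕ∞) = w.len := ENat.natCast_toNat h

lemma exists_len_eq_coe (h : ¬ w.IsRay) : ∃ n : ℕ, w.len = n := ⟨_, (coe_toNat_len h).symm⟩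

lemma coe_le_len_iff (h : ¬ w.IsRay) : (i : ℕ∞) ≤ w.len ↔ i ≤ w.len.toNat := by
  obtain ⟨n, hn⟩ := exists_len_eq_coe h
  simp [hn]

lemma coe_add_one_le_len_iff (h : ¬ w.IsRay) : (i : ℕ∞) + 1 ≤ w.len ↔ i + 1 ≤ w.len.toNat := by
  obtain ⟨n, hn⟩ := exists_len_eq_coe h
  simp only [hn, ENat.toNat_natCast]
  norm_cast

lemma coe_le_len_of_add_one_le (h : (i : ℕ∞) + 1 ≤ w.len) : (i : ℕ∞) ≤ w.len :=
  le_self_add.trans h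

lemma coe_succ_le_len_of_add_one_le (h : (i : ℕ∞) + 1 ≤ w.len) : ((i + 1 : ℕ) : ℕ∞) ≤ w.len := by
  exact_mod_cast h

lemma le_len_of_isRay (h : w.IsRay) (n : ℕ∞) : n ≤ w.len := by
  rw [show w.len = ⊤ from h]
  exact le_top

lemma vtx_mem_support (h : (i : ℕ∞) ≤ w.len) : w.vtx i ∈ w.support := ⟨i, h, rfl⟩

lemma Ini_mem_support (w : DiWalk V) : w.Ini ∈ w.support := vtx_mem_support (by simp)

lemma Ter_mem_support (h : ¬ w.IsRay) : w.Ter ∈ w.support :=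
  vtx_mem_support (coe_toNat_len h).le

lemma finite_support (h : ¬ w.IsRay) : w.support.Finite :=
  ((finite_Iic w.len.toNat).image w.vtx).subset <| by
    rintro _ ⟨i, hi, rfl⟩
    exact ⟨i, (coe_le_len_iff h).1 hi, rfl⟩

lemma one_le_len_of_Ini_ne_Ter (h : w.Ini ≠ w.Ter) : 1 ≤ w.len := by
  by_contra hlt
  have h0 : w.len = 0 := Order.lt_one_iff.1 (not_le.1 hlt)
  exact h (by simp [Ter, Ini, h0])

namespace IsPathIn

lemma adj (hw : w.IsPathIn D) (h : (i : ℕ∞) + 1 ≤ w.len) : D (w.vtx i) (w.vtx (i + 1)) :=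
  hw.1 i h

lemma inj (hw : w.IsPathIn D) (hi : (i : ℕ∞) ≤ w.len) (hj : (j : ℕ∞) ≤ w.len)
    (h : w.vtx i = w.vtx j) : i = j :=
  hw.2 i j hi hj h

lemma vtx_ne_succ (hw : w.IsPathIn D) (h : (i : ℕ∞) + 1 ≤ w.len) :
    w.vtx i ≠ w.vtx (i + 1) := fun he ↦ by
  have := hw.inj (coe_le_len_of_add_one_le h) (coe_succ_le_len_of_add_one_le h) he
  omega

lemma injective_vtx (hw : w.IsPathIn D) (hr : w.IsRay) : Function.Injective w.vtx :=
  fun _ _ ↦ hw.inj (le_len_of_isRay hr _) (le_len_of_isRay hr _)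

lemma mono (hw : w.IsPathIn D)
    (h : ∀ i : ℕ, (i : ℕ∞) + 1 ≤ w.len → D (w.vtx i) (w.vtx (i + 1)) →
      D' (w.vtx i) (w.vtx (i + 1))) : w.IsPathIn D' :=
  ⟨fun i hi ↦ h i hi (hw.adj hi), hw.2⟩

end IsPathIn

def take (w : DiWalk V) (m : ℕ) : DiWalk V := ⟨w.vtx, m⟩

lemma not_isRay_take : ¬ (w.take m).IsRay := ENat.natCast_ne_top m

@[simp] lemma Ini_take : (w.take m).Ini = w.Ini := rfl

@[simp] lemma Ter_take : (w.take m).Ter = w.vtx m := by simp [Ter, take]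

lemma IsPathIn.take (hw : w.IsPathIn D) (hm : (m : ℕ∞) ≤ w.len) : (w.take m).IsPathIn D :=
  ⟨fun _ hi ↦ hw.adj (hi.trans hm), fun _ _ hi hj ↦ hw.inj (hi.trans hm) (hj.trans hm)⟩

lemma support_take_subset (hm : (m : ℕ∞) ≤ w.len) : (w.take m).support ⊆ w.support := by
  rintro _ ⟨i, hi, rfl⟩
  exact vtx_mem_support (hi.trans hm)

open Classical in
lemma exists_take_inter_eq (h : (w.support ∩ X).Nonempty) :
    ∃ m : ℕ, (m : ℕ∞) ≤ w.len ∧ (w.take m).support ∩ X = {w.vtx m} := by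
  have hex : ∃ i : ℕ, (i : ℕ∞) ≤ w.len ∧ w.vtx i ∈ X := by
    obtain ⟨_, ⟨i, hi, rfl⟩, hX⟩ := h
    exact ⟨i, hi, hX⟩
  obtain ⟨hm, hmX⟩ := Nat.find_spec hex
  refine ⟨Nat.find hex, hm, eq_singleton_iff_unique_mem.2 ⟨⟨vtx_mem_support le_rfl, hmX⟩, ?_⟩⟩
  rintro _ ⟨⟨i, hi, rfl⟩, hX⟩
  have hi' : i ≤ Nat.find hex := by exact_mod_cast (show (i : ℕ∞) ≤ Nat.find hex from hi)
  rw [le_antisymm hi' (Nat.find_min' hex ⟨hi.trans hm, hX⟩)]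
  rfl

def drop (w : DiWalk V) (m : ℕ) : DiWalk V := ⟨fun j ↦ w.vtx (m + j), w.len - m⟩

lemma coe_le_len_drop_iff (hm : (m : ℕ∞) ≤ w.len) :
    (i : ℕ∞) ≤ (w.drop m).len ↔ ((m + i : ℕ) : ℕ∞) ≤ w.len := by
  change _ ≤ w.len - m ↔ _
  generalize w.len = n at hm ⊢
  induction n using ENat.recTopCoe with
  | top => simp
  | coe n =>
    have : m ≤ n := by exact_mod_cast hm
    norm_cast
    omega

@[simp] lemma Ini_drop : (w.drop m).Ini = w.vtx m := by simp [Ini, drop]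

lemma isRay_drop : (w.drop m).IsRay ↔ w.IsRay := by
  change w.len - m = ⊤ ↔ w.len = ⊤
  induction w.len using ENat.recTopCoe with
  | top => simp
  | coe n =>
    simp only [ENat.natCast_ne_top, iff_false]
    exact_mod_cast ENat.natCast_ne_top (n - m)

lemma Ter_drop (h : ¬ w.IsRay) (hm : (m : ℕ∞) ≤ w.len) : (w.drop m).Ter = w.Ter := by
  obtain ⟨n, hn⟩ := exists_len_eq_coe h
  rw [hn, Nat.cast_le] at hm
  have : (w.drop m).len = ((n - m : ℕ) : ℕ∞) := by simp [drop, hn]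
  simp only [Ter, this, ENat.toNat_natCast, hn]
  simp only [drop]
  congr 1
  omega

lemma IsPathIn.drop (hw : w.IsPathIn D) (hm : (m : ℕ∞) ≤ w.len) : (w.drop m).IsPathIn D := by
  refine ⟨fun i hi ↦ ?_, fun i j hi hj he ↦ ?_⟩
  · have := (coe_le_len_drop_iff hm).1 (coe_succ_le_len_of_add_one_le hi)
    exact hw.adj (by push_cast at this ⊢; rwa [add_assoc])
  · have := hw.inj ((coe_le_len_drop_iff hm).1 hi) ((coe_le_len_drop_iff hm).1 hj) he
    omega

lemma support_drop_subset (hm : (m : ℕ∞) ≤ w.len) : (w.drop m).support ⊆ w.support := by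
  rintro _ ⟨i, hi, rfl⟩
  exact vtx_mem_support ((coe_le_len_drop_iff hm).1 hi)

open Classical in
lemma exists_drop_inter_eq (h : ¬ w.IsRay) (hX : (w.support ∩ X).Nonempty) :
    ∃ m : ℕ, (m : ℕ∞) ≤ w.len ∧ (w.drop m).support ∩ X = {w.vtx m} := by
  obtain ⟨_, ⟨i, hi, rfl⟩, hiX⟩ := hX
  set m := Nat.findGreatest (fun i ↦ w.vtx i ∈ X) w.len.toNat
  have hi' := (coe_le_len_iff h).1 hi
  have hm : (m : ℕ∞) ≤ w.len := (coe_le_len_iff h).2 (Nat.findGreatest_le _)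
  refine ⟨m, hm, eq_singleton_iff_unique_mem.2
    ⟨⟨by simpa using Ini_mem_support (w.drop m),
      Nat.findGreatest_spec (P := fun i ↦ w.vtx i ∈ X) hi' hiX⟩, ?_⟩⟩
  rintro _ ⟨⟨j, hj, rfl⟩, hX⟩
  have hj' := (coe_le_len_iff h).1 ((coe_le_len_drop_iff hm).1 hj)
  have := Nat.le_findGreatest (P := fun i ↦ w.vtx i ∈ X) hj' hX
  change w.vtx (m + j) = w.vtx m
  congr 1
  omega

def append (p q : DiWalk V) : DiWalk V :=
  ⟨fun j ↦ if j ≤ p.len.toNat then p.vtx j else q.vtx (j - p.len.toNat), p.len.toNat + q.len⟩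

lemma vtx_append_of_le (hj : j ≤ p.len.toNat) : (p.append q).vtx j = p.vtx j := if_pos hj

lemma vtx_append_of_ge (hpq : p.Ter = q.Ini) (hj : p.len.toNat ≤ j) :
    (p.append q).vtx j = q.vtx (j - p.len.toNat) := by
  rcases hj.eq_or_lt with rfl | hlt
  · rw [vtx_append_of_le le_rfl, Nat.sub_self]
    exact hpq
  · exact if_neg (not_le.2 hlt)

lemma coe_le_len_append_iff (hj : p.len.toNat ≤ j) :
    (j : ℕ∞) ≤ (p.append q).len ↔ ((j - p.len.toNat : ℕ) : ℕ∞) ≤ q.len := by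
  change _ ≤ (p.len.toNat : ℕ∞) + q.len ↔ _
  induction q.len using ENat.recTopCoe with
  | top => simp
  | coe n => norm_cast; omega

lemma coe_le_len_append_of_le (hj : j ≤ p.len.toNat) : (j : ℕ∞) ≤ (p.append q).len :=
  (Nat.cast_le.2 hj).trans le_self_add

@[simp] lemma Ini_append : (p.append q).Ini = p.Ini := vtx_append_of_le (Nat.zero_le _)

lemma not_isRay_append (hq : ¬ q.IsRay) : ¬ (p.append q).IsRay := by
  change ¬ _ + q.len = ⊤
  rw [ENat.add_eq_top]
  exact fun h ↦ h.elim (ENat.natCast_ne_top _) hq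

lemma Ter_append (hpq : p.Ter = q.Ini) (hq : ¬ q.IsRay) : (p.append q).Ter = q.Ter := by
  obtain ⟨n, hn⟩ := exists_len_eq_coe hq
  have hlen : (p.append q).len.toNat = p.len.toNat + n := by
    change ((p.len.toNat : ℕ∞) + q.len).toNat = _
    rw [hn]; norm_cast
  rw [Ter, hlen, vtx_append_of_ge hpq (by omega), Ter, hn, ENat.toNat_natCast]
  congr 1
  omega

lemma support_append (hpq : p.Ter = q.Ini) (hp : ¬ p.IsRay) :
    (p.append q).support = p.support ∪ q.support := by
  ext v
  constructor
  · rintro ⟨j, hj, rfl⟩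
    by_cases hjp : j ≤ p.len.toNat
    · exact .inl (vtx_append_of_le hjp ▸ vtx_mem_support ((coe_le_len_iff hp).2 hjp))
    · rw [vtx_append_of_ge hpq (by omega)]
      exact .inr (vtx_mem_support ((coe_le_len_append_iff (by omega)).1 hj))
  · rintro (⟨j, hj, rfl⟩ | ⟨j, hj, rfl⟩)
    · have hj' := (coe_le_len_iff hp).1 hj
      exact vtx_append_of_le hj' ▸ vtx_mem_support (coe_le_len_append_of_le hj')
    · have hj' : p.len.toNat ≤ p.len.toNat + j := by omega
      refine ⟨p.len.toNat + j, (coe_le_len_append_iff hj').2 (by simpa using hj), ?_⟩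
      rw [vtx_append_of_ge hpq hj']
      simp

lemma IsPathIn.append (hp : p.IsPathIn D) (hpr : ¬ p.IsRay) (hq : q.IsPathIn D)
    (hpq : p.Ter = q.Ini) (hmeet : p.support ∩ q.support ⊆ {p.Ter}) :
    (p.append q).IsPathIn D := by
  set n := p.len.toNat
  have hmixed : ∀ i j : ℕ, i ≤ n → n < j → (j : ℕ∞) ≤ (p.append q).len →
      (p.append q).vtx i ≠ (p.append q).vtx j := by
    intro i j hi hj hjl he
    have hjq := (coe_le_len_append_iff hj.le).1 hjl
    rw [vtx_append_of_le hi, vtx_append_of_ge hpq hj.le] at he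
    have hmem := hmeet ⟨he ▸ vtx_mem_support ((coe_le_len_iff hpr).2 hi), vtx_mem_support hjq⟩
    rw [mem_singleton_iff, hpq, Ini] at hmem
    have := hq.inj hjq (by simp) hmem
    omega
  refine ⟨fun i hi ↦ ?_, fun i j hi hj he ↦ ?_⟩
  · by_cases hin : i + 1 ≤ n
    · rw [vtx_append_of_le hin, vtx_append_of_le (by omega)]
      exact hp.adj ((coe_add_one_le_len_iff hpr).2 hin)
    · have hq1 := (coe_le_len_append_iff (j := i + 1) (by omega)).1
        (coe_succ_le_len_of_add_one_le hi)
      rw [vtx_append_of_ge hpq (by omega), vtx_append_of_ge hpq (by omega),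
        show i + 1 - n = i - n + 1 by omega]
      exact hq.adj (by rw [show i + 1 - n = i - n + 1 by omega] at hq1; exact_mod_cast hq1)
  · rcases le_or_gt i n with hin | hin <;> rcases le_or_gt j n with hjn | hjn
    · rw [vtx_append_of_le hin, vtx_append_of_le hjn] at he
      exact hp.inj ((coe_le_len_iff hpr).2 hin) ((coe_le_len_iff hpr).2 hjn) he
    · exact absurd he (hmixed i j hin hjn hj)
    · exact absurd he.symm (hmixed j i hjn hin hi)
    · rw [vtx_append_of_ge hpq hin.le, vtx_append_of_ge hpq hjn.le] at he
      have := hq.inj ((coe_le_len_append_iff hin.le).1 hi) ((coe_le_len_append_iff hjn.le).1 hj) he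
      omega

def reverse (w : DiWalk V) : DiWalk V := ⟨fun j ↦ w.vtx (w.len.toNat - j), w.len.toNat⟩

lemma not_isRay_reverse : ¬ w.reverse.IsRay := ENat.natCast_ne_top _

@[simp] lemma Ini_reverse : w.reverse.Ini = w.Ter := by simp [Ini, reverse, Ter]

@[simp] lemma Ter_reverse : w.reverse.Ter = w.Ini := by simp [Ter, reverse, Ini]

lemma coe_le_len_reverse_iff : (i : ℕ∞) ≤ w.reverse.len ↔ i ≤ w.len.toNat := Nat.cast_le

lemma support_reverse (h : ¬ w.IsRay) : w.reverse.support = w.support := by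
  ext v
  constructor
  · rintro ⟨j, -, rfl⟩
    exact vtx_mem_support ((coe_le_len_iff h).2 (Nat.sub_le _ _))
  · rintro ⟨i, hi, rfl⟩
    have hi' := (coe_le_len_iff h).1 hi
    refine ⟨w.len.toNat - i, coe_le_len_reverse_iff.2 (Nat.sub_le _ _), ?_⟩
    change w.vtx (w.len.toNat - (w.len.toNat - i)) = _
    rw [Nat.sub_sub_self hi']

lemma mem_edges_reverse (h : ¬ w.IsRay) {a b : V} :
    (a, b) ∈ w.reverse.edges ↔ (b, a) ∈ w.edges := by
  simp only [edges, mem_ofPred_eq, Prod.mk.injEq, coe_add_one_le_len_iff h,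
    coe_add_one_le_len_iff not_isRay_reverse]
  change (∃ i, i + 1 ≤ (w.len.toNat : ℕ∞).toNat ∧ _) ↔ _
  rw [ENat.toNat_natCast]
  constructor
  · rintro ⟨i, hi, rfl, rfl⟩
    exact ⟨w.len.toNat - (i + 1), by omega, rfl, congrArg w.vtx (by omega)⟩
  · rintro ⟨i, hi, rfl, rfl⟩
    exact ⟨w.len.toNat - (i + 1), by omega, congrArg w.vtx (by omega), congrArg w.vtx (by omega)⟩

lemma IsPathIn.reverse (hw : w.IsPathIn D) (h : ¬ w.IsRay) :
    w.reverse.IsPathIn (fun a b ↦ (b, a) ∈ w.edges) := by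
  refine ⟨fun i hi ↦ (mem_edges_reverse h).1 ⟨i, hi, rfl⟩, fun i j hi hj he ↦ ?_⟩
  rw [coe_le_len_reverse_iff] at hi hj
  have := hw.inj ((coe_le_len_iff h).2 (Nat.sub_le _ i)) ((coe_le_len_iff h).2 (Nat.sub_le _ j)) he
  omega

end DiWalk

open DiWalk

section PathSystems

variable {D : V → V → Prop} {B0 : Set V} {P Q : Set (DiWalk V)} {p q : DiWalk V}
  {a b c v : V} {i j : ℕ}

lemma mem_VSet : v ∈ VSet Q ↔ ∃ q ∈ Q, v ∈ q.support := by simp [VSet]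

lemma mem_ESet : (a, b) ∈ ESet Q ↔
    ∃ q ∈ Q, ∃ i : ℕ, (i : ℕ∞) + 1 ≤ q.len ∧ q.vtx i = a ∧ q.vtx (i + 1) = b := by
  simp [ESet, DiWalk.edges, eq_comm]

lemma mem_ESet_of_mem (hq : q ∈ Q) (hi : (i : ℕ∞) + 1 ≤ q.len) :
    (q.vtx i, q.vtx (i + 1)) ∈ ESet Q :=
  mem_ESet.2 ⟨q, hq, i, hi, rfl, rfl⟩

lemma fst_mem_VSet (h : (a, b) ∈ ESet Q) : a ∈ VSet Q := by
  obtain ⟨q, hq, i, hi, rfl, -⟩ := mem_ESet.1 h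
  exact mem_VSet.2 ⟨q, hq, vtx_mem_support (coe_le_len_of_add_one_le hi)⟩

lemma snd_mem_VSet (h : (a, b) ∈ ESet Q) : b ∈ VSet Q := by
  obtain ⟨q, hq, i, hi, -, rfl⟩ := mem_ESet.1 h
  exact mem_VSet.2 ⟨q, hq, vtx_mem_support (coe_succ_le_len_of_add_one_le hi)⟩

lemma IniSet_subset_VSet : IniSet Q ⊆ VSet Q := by
  rintro _ ⟨q, hq, rfl⟩
  exact mem_VSet.2 ⟨q, hq, Ini_mem_support q⟩

lemma PairwiseDisjointWalks.eq_of_mem_support (hd : PairwiseDisjointWalks P) (hp : p ∈ P)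
    (hq : q ∈ P) (hvp : v ∈ p.support) (hvq : v ∈ q.support) : p = q := by
  by_contra hne
  exact (hd p hp q hq hne).ne_of_mem hvp hvq rfl

lemma mem_TerSet_of_mem_ESet (h : (a, b) ∈ ESet P) (hb : ¬ ∃ c, (b, c) ∈ ESet P) :
    b ∈ TerSet P := by
  obtain ⟨p, hp, i, hi, -, rfl⟩ := mem_ESet.1 h
  have hnext : ¬ ((↑(i + 1) : ℕ∞) + 1 ≤ p.len) := fun h' ↦ hb ⟨_, mem_ESet_of_mem hp h'⟩
  have hpr : ¬ p.IsRay := fun hr ↦ hnext (le_len_of_isRay hr _)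
  rw [coe_add_one_le_len_iff hpr] at hnext
  have := (coe_add_one_le_len_iff hpr).1 hi
  exact ⟨p, hp, hpr, congrArg p.vtx (by omega)⟩

lemma Ini_mem_TerSet (hp : p ∈ P) (h : ¬ ∃ c, (p.Ini, c) ∈ ESet P) : p.Ini ∈ TerSet P := by
  have hlen : ¬ ((0 : ℕ) : ℕ∞) + 1 ≤ p.len := fun h' ↦ h ⟨_, mem_ESet_of_mem hp h'⟩
  have h0 : p.len = 0 := Order.lt_one_iff.1 (by simpa using hlen)
  exact ⟨p, hp, by simp [IsRay, h0], by simp [Ter, Ini, h0]⟩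

lemma PairwiseDisjointWalks.mono {P' : Set (DiWalk V)} (hd : PairwiseDisjointWalks P)
    (h : P' ⊆ P) : PairwiseDisjointWalks P' :=
  fun p hp q hq ↦ hd p (h hp) q (h hq)

lemma PairwiseDisjointWalks.finite_setOf_Ter_mem (hd : PairwiseDisjointWalks P)
    (hP : ∀ p ∈ P, ¬ p.IsRay) {X : Set V} (hX : X.Finite) : {p ∈ P | p.Ter ∈ X}.Finite :=
  Finite.of_finite_image (hX.subset (image_subset_iff.2 fun _ hp ↦ hp.2)) fun p hp p' hp' he ↦
    hd.eq_of_mem_support hp.1 hp'.1 (Ter_mem_support (hP p hp.1))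
      (he ▸ Ter_mem_support (hP p' hp'.1))

namespace IsPathSystem

variable (hP : IsPathSystem D P)
include hP

lemma eq_of_vtx_eq (hp : p ∈ P) (hq : q ∈ P) (hi : (i : ℕ∞) ≤ p.len) (hj : (j : ℕ∞) ≤ q.len)
    (he : p.vtx i = q.vtx j) : p = q ∧ i = j := by
  obtain rfl := hP.2.eq_of_mem_support hp hq (vtx_mem_support hi) (he ▸ vtx_mem_support hj)
  exact ⟨rfl, (hP.1 p hp).inj hi hj he⟩

lemma succ_of_mem_ESet (hp : p ∈ P) (hi : (i : ℕ∞) ≤ p.len) (h : (p.vtx i, b) ∈ ESet P) :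
    (i : ℕ∞) + 1 ≤ p.len ∧ p.vtx (i + 1) = b := by
  obtain ⟨q, hq, j, hj, hqj, rfl⟩ := mem_ESet.1 h
  obtain ⟨rfl, rfl⟩ := hP.eq_of_vtx_eq hq hp (coe_le_len_of_add_one_le hj) hi hqj
  exact ⟨hj, rfl⟩

lemma pred_of_mem_ESet (hp : p ∈ P) (hi : (i : ℕ∞) ≤ p.len) (h : (a, p.vtx i) ∈ ESet P) :
    ∃ j, i = j + 1 ∧ p.vtx j = a := by
  obtain ⟨q, hq, j, hj, rfl, hqj⟩ := mem_ESet.1 h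
  obtain ⟨rfl, rfl⟩ := hP.eq_of_vtx_eq hq hp (coe_succ_le_len_of_add_one_le hj) hi hqj
  exact ⟨j, rfl, rfl⟩

lemma adj_of_mem_ESet (h : (a, b) ∈ ESet P) : D a b := by
  obtain ⟨q, hq, i, hi, rfl, rfl⟩ := mem_ESet.1 h
  exact (hP.1 q hq).adj hi

lemma snd_eq_of_mem_ESet (h : (a, b) ∈ ESet P) (h' : (a, c) ∈ ESet P) : b = c := by
  obtain ⟨q, hq, i, hi, rfl, rfl⟩ := mem_ESet.1 h
  exact (hP.succ_of_mem_ESet hq (coe_le_len_of_add_one_le hi) h').2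

lemma fst_eq_of_mem_ESet (h : (a, c) ∈ ESet P) (h' : (b, c) ∈ ESet P) : a = b := by
  obtain ⟨q, hq, i, hi, rfl, rfl⟩ := mem_ESet.1 h
  obtain ⟨j, hj, rfl⟩ := hP.pred_of_mem_ESet hq (coe_succ_le_len_of_add_one_le hi) h'
  rw [Nat.add_right_cancel hj]

lemma snd_notMem_IniSet (h : (a, b) ∈ ESet P) : b ∉ IniSet P := by
  rintro ⟨p, hp, rfl⟩
  obtain ⟨j, hj, -⟩ := hP.pred_of_mem_ESet hp (by simp) h
  omega

lemma exists_isRay_of_mem_ESet {f : ℕ → V} (hf : ∀ k, (f k, f (k + 1)) ∈ ESet P) :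
    ∃ p ∈ P, p.IsRay ∧ ∃ j₀, ∀ k, p.vtx (j₀ + k) = f k := by
  obtain ⟨p, hp, j₀, hj₀, hpj₀, -⟩ := mem_ESet.1 (hf 0)
  have hfollow : ∀ k, (↑(j₀ + k) : ℕ∞) + 1 ≤ p.len ∧ p.vtx (j₀ + k) = f k := by
    intro k
    induction k with
    | zero => exact ⟨hj₀, hpj₀⟩
    | succ k ih =>
      obtain ⟨-, hnext⟩ := hP.succ_of_mem_ESet hp (coe_le_len_of_add_one_le ih.1) (ih.2 ▸ hf k)
      rw [← add_assoc, hnext]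
      refine ⟨?_, rfl⟩
      exact (hP.succ_of_mem_ESet hp (coe_succ_le_len_of_add_one_le ih.1)
        (hnext ▸ hf (k + 1))).1
  refine ⟨p, hp, ?_, j₀, fun k ↦ (hfollow k).2⟩
  by_contra hpr
  have := (coe_add_one_le_len_iff hpr).1 (hfollow p.len.toNat).1
  omega

end IsPathSystem

namespace IsLinkage

variable (hQ : IsLinkage D B0 Q)
include hQ

lemma not_isRay (hq : q ∈ Q) : ¬ q.IsRay := (hQ.2 q hq).1

lemma Ter_mem (hq : q ∈ Q) : q.Ter ∈ B0 := (hQ.2 q hq).2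

lemma TerSet_subset : TerSet Q ⊆ B0 := by
  rintro _ ⟨q, hq, -, rfl⟩
  exact hQ.Ter_mem hq

lemma exists_mem_ESet (hv : v ∈ VSet Q) (hvT : v ∉ TerSet Q) : ∃ b, (v, b) ∈ ESet Q := by
  obtain ⟨q, hq, i, hi, rfl⟩ := mem_VSet.1 hv
  have hqr := hQ.not_isRay hq
  rcases ((coe_le_len_iff hqr).1 hi).eq_or_lt with h | h
  · exact absurd ⟨q, hq, hqr, by rw [Ter, ← h]⟩ hvT
  · exact ⟨_, mem_ESet_of_mem hq ((coe_add_one_le_len_iff hqr).2 h)⟩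

lemma mem_TerSet_of_mem (hDim : IsDimaze D B0) (hv : v ∈ VSet Q) (hb : v ∈ B0) :
    v ∈ TerSet Q := by
  by_contra hvT
  obtain ⟨b, hvb⟩ := hQ.exists_mem_ESet hv hvT
  exact hDim v hb b (hQ.1.adj_of_mem_ESet hvb)

end IsLinkage

end PathSystems

section Combs

variable {D : V → V → Prop} {B0 : Set V} {Q P : Set (DiWalk V)} {p W : DiWalk V}

/-- The teeth are the final segments of these paths after their last vertex on the ray. -/
lemma IsLinkage.isSpine_of_infinite (hDim : IsDimaze D B0) (hQ : IsLinkage D B0 Q)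
    (hW : W.IsPathIn D) (hWr : W.IsRay)
    (hinf : {q ∈ Q | (q.support ∩ W.support).Nonempty}.Infinite) : IsSpine D B0 W := by
  set Qₜ := {q ∈ Q | (q.support ∩ W.support).Nonempty}
  have hcut : ∀ q ∈ Qₜ, ∃ m : ℕ, (m : ℕ∞) ≤ q.len ∧ (q.drop m).support ∩ W.support = {q.vtx m} :=
    fun q hq ↦ exists_drop_inter_eq (hQ.not_isRay hq.1) hq.2
  choose! m hm hmW using hcut
  have hsub : ∀ q ∈ Qₜ, (q.drop (m q)).support ⊆ q.support :=
    fun q hq ↦ support_drop_subset (hm q hq)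
  have hWB : ∀ v ∈ W.support, v ∉ B0 := by
    rintro _ ⟨i, -, rfl⟩ hb
    exact hDim _ hb _ (hW.adj (le_len_of_isRay hWr _))
  refine ⟨hW, hWr, (fun q ↦ q.drop (m q)) '' Qₜ, hinf.image ?_, ?_, ?_⟩
  · intro q hq q' hq' he
    have hq'Ini := hsub q' hq' (Ini_mem_support _)
    simp only at he
    rw [← he] at hq'Ini
    exact hQ.1.2.eq_of_mem_support hq.1 hq'.1 (hsub q hq (Ini_mem_support _)) hq'Ini
  · rintro _ ⟨q, hq, rfl⟩
    have hqr := hQ.not_isRay hq.1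
    have hIni : (q.drop (m q)).Ini ∈ W.support := by
      rw [Ini_drop]
      exact (eq_singleton_iff_unique_mem.1 (hmW q hq)).1.2
    have hTer : (q.drop (m q)).Ter ∈ B0 := Ter_drop hqr (hm q hq) ▸ hQ.Ter_mem hq.1
    refine ⟨(hQ.1.1 q hq.1).drop (hm q hq), fun h ↦ hqr (isRay_drop.1 h),
      one_le_len_of_Ini_ne_Ter fun he ↦ hWB _ hIni (he ▸ hTer), hIni, hTer, ?_⟩
    rw [hmW q hq, Ini_drop]
  · rintro _ ⟨q, hq, rfl⟩ _ ⟨q', hq', rfl⟩ hne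
    exact (hQ.1.2 q hq.1 q' hq'.1 fun h ↦ hne (h ▸ rfl)).mono (hsub q hq) (hsub q' hq')

lemma exists_forall_vtx_add_notMem_VSet {D' : V → V → Prop} (hQ : ∀ q ∈ Q, ¬ q.IsRay)
    (hW : W.IsPathIn D') (hWr : W.IsRay)
    (hfin : {q ∈ Q | (q.support ∩ W.support).Nonempty}.Finite) :
    ∃ N, ∀ k, W.vtx (N + k) ∉ VSet Q := by
  have hidx : {n | W.vtx n ∈ VSet Q}.Finite := by
    refine (hfin.biUnion fun q hq ↦ (finite_support (hQ q hq.1)).preimage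
      (hW.injective_vtx hWr).injOn).subset ?_
    intro n hn
    obtain ⟨q, hq, hnq⟩ := mem_VSet.1 hn
    exact mem_biUnion ⟨hq, _, hnq, vtx_mem_support (le_len_of_isRay hWr _)⟩ hnq
  obtain ⟨N, hN⟩ := hidx.bddAbove
  exact ⟨N + 1, fun k hk ↦ by have := hN hk; omega⟩

lemma IsLinkage.exists_extension (hQ : IsLinkage D B0 Q) (hp : p.IsPathIn D) (hpr : ¬ p.IsRay)
    (hpQ : p.support ∩ VSet Q = {p.Ter}) :
    ∃ q ∈ Q, p.Ter ∈ q.support ∧ ∃ t : DiWalk V, t.IsPathIn D ∧ ¬ t.IsRay ∧ t.Ini = p.Ini ∧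
      t.Ter = q.Ter ∧ t.support ⊆ (p.support \ VSet Q) ∪ q.support := by
  have hTerQ : p.Ter ∈ VSet Q := (eq_singleton_iff_unique_mem.1 hpQ).1.2
  obtain ⟨q, hq, hTerq⟩ := mem_VSet.1 hTerQ
  obtain ⟨r, hr, hqr⟩ := hTerq
  have hqQ : q.support ⊆ VSet Q := fun v hv ↦ mem_VSet.2 ⟨q, hq, hv⟩
  have hpq : p.Ter = (q.drop r).Ini := by rw [Ini_drop, hqr]
  have hdrop := support_drop_subset hr
  refine ⟨q, hq, hqr ▸ vtx_mem_support hr, p.append (q.drop r), ?_,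
    not_isRay_append fun h ↦ hQ.not_isRay hq (isRay_drop.1 h), Ini_append, ?_, ?_⟩
  · refine hp.append hpr ((hQ.1.1 q hq).drop hr) hpq fun v hv ↦ ?_
    rw [← hpQ]
    exact ⟨hv.1, hqQ (hdrop hv.2)⟩
  · rw [Ter_append hpq fun h ↦ hQ.not_isRay hq (isRay_drop.1 h), Ter_drop (hQ.not_isRay hq) hr]
  · rw [support_append hpq hpr]
    rintro v (hv | hv)
    · by_cases hvQ : v ∈ VSet Q
      · rw [(eq_singleton_iff_unique_mem.1 hpQ).2 v ⟨hv, hvQ⟩, ← hqr]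
        exact .inr (vtx_mem_support hr)
      · exact .inl ⟨hv, hvQ⟩
    · exact .inr (hdrop hv)

lemma Set.Infinite.exists_subset_infinite_injOn {α β : Type*} {s : Set α} (hs : s.Infinite)
    (f : α → β) (hf : ∀ b, (s ∩ f ⁻¹' {b}).Finite) : ∃ t ⊆ s, t.Infinite ∧ InjOn f t := by
  obtain ⟨t, hts, hbij⟩ := exists_subset_bijOn s f
  refine ⟨t, hts, Infinite.of_image f ?_, hbij.injOn⟩
  rw [hbij.image_eq]
  exact fun hfin ↦ hs (Finite.of_finite_fibers f hfin fun b _ ↦ hf b)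

/-- Extend the paths along `Q`, keeping one for each path of `Q` that is reached. -/
lemma IsLinkage.isSpine_of_paths_to_VSet (hQ : IsLinkage D B0 Q) (hW : W.IsPathIn D)
    (hWr : W.IsRay) (hWQ : Disjoint W.support (VSet Q)) (hPinf : P.Infinite)
    (hPd : PairwiseDisjointWalks P)
    (hP : ∀ p ∈ P, p.IsPathIn D ∧ ¬ p.IsRay ∧ p.support ∩ W.support = {p.Ini} ∧
      p.support ∩ VSet Q = {p.Ter}) :
    IsSpine D B0 W := by
  choose! q hq hTerq t ht htr htIni htTer htsub using
    fun p hp ↦ hQ.exists_extension (hP p hp).1 (hP p hp).2.1 (hP p hp).2.2.2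
  obtain ⟨P', hP'P, hP'inf, hqinj⟩ := hPinf.exists_subset_infinite_injOn q fun q₀ ↦ by
    by_cases hq₀ : q₀ ∈ Q
    · refine (hPd.finite_setOf_Ter_mem (fun p hp ↦ (hP p hp).2.1)
        (finite_support (hQ.not_isRay hq₀))).subset fun p hp ↦ ⟨hp.1, ?_⟩
      exact mem_singleton_iff.1 hp.2 ▸ hTerq p hp.1
    · exact finite_empty.subset fun p hp ↦ hq₀ ((mem_singleton_iff.1 hp.2) ▸ hq p hp.1)
  have hqQ : ∀ p ∈ P, (q p).support ⊆ VSet Q := fun p hp v hv ↦ mem_VSet.2 ⟨q p, hq p hp, hv⟩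
  refine ⟨hW, hWr, t '' P', hP'inf.image fun p hp p' hp' he ↦ ?_, ?_, ?_⟩
  · refine hPd.eq_of_mem_support (hP'P hp) (hP'P hp') (Ini_mem_support p) ?_
    rw [← htIni p (hP'P hp), he, htIni p' (hP'P hp')]
    exact Ini_mem_support p'
  · rintro _ ⟨p, hp, rfl⟩
    have hp := hP'P hp
    have hIni : (t p).Ini ∈ W.support :=
      htIni p hp ▸ (eq_singleton_iff_unique_mem.1 (hP p hp).2.2.1).1.2
    have hTer : (t p).Ter ∈ (q p).support := htTer p hp ▸ Ter_mem_support (hQ.not_isRay (hq p hp))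
    refine ⟨ht p hp, htr p hp, one_le_len_of_Ini_ne_Ter fun he ↦ ?_, hIni,
      htTer p hp ▸ hQ.Ter_mem (hq p hp), subset_antisymm (fun v hv ↦ ?_) ?_⟩
    · exact hWQ.notMem_of_mem_left hIni (he ▸ hqQ p hp hTer)
    · rcases htsub p hp hv.1 with hvp | hvq
      · rw [htIni p hp, ← (hP p hp).2.2.1]
        exact ⟨hvp.1, hv.2⟩
      · exact absurd (hqQ p hp hvq) (hWQ.notMem_of_mem_left hv.2)
    · exact singleton_subset_iff.2 ⟨Ini_mem_support _, hIni⟩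
  · rintro _ ⟨p, hp, rfl⟩ _ ⟨p', hp', rfl⟩ hne
    have hpp' : p ≠ p' := fun h ↦ hne (h ▸ rfl)
    have hQd := hQ.1.2 _ (hq p (hP'P hp)) _ (hq p' (hP'P hp')) fun h ↦ hpp' (hqinj hp hp' h)
    refine disjoint_left.2 fun v hv hv' ↦ ?_
    rcases htsub p (hP'P hp) hv with hv | hv <;> rcases htsub p' (hP'P hp') hv' with hv' | hv'
    · exact (hPd p (hP'P hp) p' (hP'P hp') hpp').notMem_of_mem_left hv.1 hv'.1
    · exact hv.2 (hqQ p' (hP'P hp') hv')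
    · exact hv'.2 (hqQ p (hP'P hp) hv)
    · exact hQd.notMem_of_mem_left hv hv'

end Combs

section Shift

variable {D : V → V → Prop} {B0 : Set V} {Q P : Set (DiWalk V)} {p R W : DiWalk V}
  {a u s : V}

def shiftedExits (B0 : Set V) (Q : Set (DiWalk V)) : Set V := (B0 \ TerSet Q) ∪ IniSet Q

lemma adj_of_shiftedDigraph_of_notMem (h : shiftedDigraph D (ESet Q) (VSet Q) a u)
    (ha : a ∉ VSet Q) : D a u := by
  rcases h with h | ⟨v, hvu, -, ⟨-, rfl⟩ | hva⟩
  · exact absurd (snd_mem_VSet h) ha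
  · exact hvu
  · exact absurd (snd_mem_VSet hva) ha

lemma not_shiftedDigraph_of_mem_IniSet (hQ : IsPathSystem D Q) (hs : s ∈ IniSet Q) :
    ¬ shiftedDigraph D (ESet Q) (VSet Q) s u := by
  rintro (h | ⟨v, -, -, ⟨hv, rfl⟩ | hvs⟩)
  · exact hQ.snd_notMem_IniSet h hs
  · exact hv (IniSet_subset_VSet hs)
  · exact hQ.snd_notMem_IniSet hvs hs

lemma IsDimaze.shift (hDim : IsDimaze D B0) (hQ : IsLinkage D B0 Q) :
    IsDimaze (shiftedDigraph D (ESet Q) (VSet Q)) (shiftedExits B0 Q) := by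
  rintro b (⟨hb, hbT⟩ | hbS) u h
  · rcases h with h | ⟨v, hvu, -, ⟨-, rfl⟩ | hvb⟩
    · exact hbT (hQ.mem_TerSet_of_mem hDim (snd_mem_VSet h) hb)
    · exact hDim b hb u hvu
    · exact hbT (hQ.mem_TerSet_of_mem hDim (snd_mem_VSet hvb) hb)
  · exact not_shiftedDigraph_of_mem_IniSet hQ.1 hbS h

lemma VSet_image_reverse (hQ : ∀ q ∈ Q, ¬ q.IsRay) : VSet (reverse '' Q) = VSet Q := by
  ext v
  simp only [mem_VSet, exists_mem_image]
  exact exists_congr fun q ↦ and_congr_right fun hq ↦ by rw [support_reverse (hQ q hq)]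

lemma mem_ESet_image_reverse (hQ : ∀ q ∈ Q, ¬ q.IsRay) :
    (a, u) ∈ ESet (reverse '' Q) ↔ (u, a) ∈ ESet Q := by
  simp only [ESet, mem_iUnion, exists_prop, exists_mem_image]
  exact exists_congr fun q ↦ and_congr_right fun hq ↦ mem_edges_reverse (hQ q hq)

lemma IniSet_image_reverse (hQ : ∀ q ∈ Q, ¬ q.IsRay) : IniSet (reverse '' Q) = TerSet Q := by
  ext v
  simp only [IniSet, TerSet, image_image, Ini_reverse, mem_image, mem_ofPred_eq]
  exact exists_congr fun q ↦ and_congr_right fun hq ↦ by simp [hQ q hq]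

lemma TerSet_image_reverse : TerSet (reverse '' Q) = IniSet Q := by
  ext v
  simp [IniSet, TerSet, not_isRay_reverse]

lemma shiftedExits_reverse (hDim : IsDimaze D B0) (hQ : IsLinkage D B0 Q) :
    shiftedExits (shiftedExits B0 Q) (reverse '' Q) = B0 := by
  rw [shiftedExits, IniSet_image_reverse fun q hq ↦ hQ.not_isRay hq, TerSet_image_reverse]
  ext b
  constructor
  · rintro (⟨⟨hb, -⟩ | hbS, hbS'⟩ | hbT)
    exacts [hb, absurd hbS hbS', hQ.TerSet_subset hbT]
  · intro hb
    by_cases hbT : b ∈ TerSet Q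
    · exact .inr hbT
    · exact .inl ⟨.inl ⟨hb, hbT⟩, fun hbS ↦
        hbT (hQ.mem_TerSet_of_mem hDim (IniSet_subset_VSet hbS) hb)⟩

lemma IsLinkage.image_reverse (hQ : IsLinkage D B0 Q) :
    IsLinkage (shiftedDigraph D (ESet Q) (VSet Q)) (shiftedExits B0 Q)
      (reverse '' Q) := by
  refine ⟨⟨?_, ?_⟩, ?_⟩
  · rintro _ ⟨q, hq, rfl⟩
    refine ((hQ.1.1 q hq).reverse (hQ.not_isRay hq)).mono fun i _ h ↦ .inl ?_
    exact mem_biUnion hq h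
  · rintro _ ⟨q, hq, rfl⟩ _ ⟨q', hq', rfl⟩ hne
    rw [support_reverse (hQ.not_isRay hq), support_reverse (hQ.not_isRay hq')]
    exact hQ.1.2 q hq q' hq' (ne_of_apply_ne _ hne)
  · rintro _ ⟨q, hq, rfl⟩
    exact ⟨not_isRay_reverse, .inr (by rw [Ter_reverse]; exact ⟨q, hq, rfl⟩)⟩

lemma shiftedDigraph_reverse_iff (hDim : IsDimaze D B0) (hQ : IsLinkage D B0 Q) (hau : a ≠ u) :
    shiftedDigraph (shiftedDigraph D (ESet Q) (VSet Q)) (ESet (reverse '' Q))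
      (VSet (reverse '' Q)) a u ↔ D a u := by
  have hfin : ∀ q ∈ Q, ¬ q.IsRay := fun q hq ↦ hQ.not_isRay hq
  simp only [shiftedDigraph, VSet_image_reverse hfin, mem_ESet_image_reverse hfin]
  constructor
  · rintro (h | ⟨v, h | ⟨w, hwu, -, ⟨hw, rfl⟩ | hwv⟩, hvu, hva⟩)
    · exact hQ.1.adj_of_mem_ESet h
    · exact absurd h hvu
    · rcases hva with ⟨-, rfl⟩ | hva
      exacts [hwu, absurd (snd_mem_VSet hva) hw]
    · rcases hva with ⟨hv, rfl⟩ | hva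
      · exact absurd (snd_mem_VSet hwv) hv
      · rwa [← hQ.1.fst_eq_of_mem_ESet hwv hva]
  · intro hau'
    by_cases hEQ : (a, u) ∈ ESet Q
    · exact .inl hEQ
    by_cases haQ : a ∈ VSet Q
    · have haT : a ∉ TerSet Q := fun haT ↦ hDim a (hQ.TerSet_subset haT) u hau'
      obtain ⟨b, hab⟩ := hQ.exists_mem_ESet haQ haT
      refine .inr ⟨b, .inr ⟨a, hau', hEQ, .inr hab⟩, fun hub ↦ hau ?_, .inr hab⟩
      exact hQ.1.fst_eq_of_mem_ESet hab hub
    · exact .inr ⟨a, .inr ⟨a, hau', hEQ, .inl ⟨haQ, rfl⟩⟩,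
        fun hua ↦ haQ (snd_mem_VSet hua), .inl ⟨haQ, rfl⟩⟩

lemma Linkable.mono_of_ne {D' : V → V → Prop} (h : ∀ a u, a ≠ u → D a u → D' a u)
    {I : Set V} (hl : Linkable D B0 I) : Linkable D' B0 I := by
  obtain ⟨P, ⟨⟨hP, hPd⟩, hPB⟩, rfl⟩ := hl
  exact ⟨P, ⟨⟨fun p hp ↦ (hP p hp).mono fun i hi ↦ h _ _ ((hP p hp).vtx_ne_succ hi), hPd⟩, hPB⟩,
    rfl⟩

lemma DiWalk.IsPathIn.of_shiftedDigraph (hp : p.IsPathIn (shiftedDigraph D (ESet Q) (VSet Q)))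
    (h : ∀ i : ℕ, (i : ℕ∞) + 1 ≤ p.len → p.vtx i ∉ VSet Q) : p.IsPathIn D :=
  hp.mono fun i hi h' ↦ adj_of_shiftedDigraph_of_notMem h' (h i hi)

lemma DiWalk.IsPathIn.exists_take_of_shiftedDigraph
    (hp : p.IsPathIn (shiftedDigraph D (ESet Q) (VSet Q))) (h : (p.support ∩ VSet Q).Nonempty) :
    ∃ m : ℕ, (m : ℕ∞) ≤ p.len ∧ (p.take m).IsPathIn D ∧
      (p.take m).support ∩ VSet Q = {(p.take m).Ter} := by
  obtain ⟨m, hm, hmQ⟩ := exists_take_inter_eq h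
  refine ⟨m, hm, (hp.take hm).of_shiftedDigraph fun i hi₁ hiQ ↦ ?_, by rwa [Ter_take]⟩
  have hi : (i : ℕ∞) ≤ m := coe_le_len_of_add_one_le hi₁
  have := hp.inj (hi.trans hm) hm <|
    (eq_singleton_iff_unique_mem.1 hmQ).2 _ ⟨vtx_mem_support hi, hiQ⟩
  change (i : ℕ∞) + 1 ≤ m at hi₁
  norm_cast at hi₁
  omega

def IsTooth (D : V → V → Prop) (B0 : Set V) (R p : DiWalk V) : Prop :=
  p.IsPathIn D ∧ ¬ p.IsRay ∧ 1 ≤ p.len ∧ p.Ini ∈ R.support ∧ p.Ter ∈ B0 ∧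
    p.support ∩ R.support = {p.Ini}

lemma isSpine_iff : IsSpine D B0 R ↔ R.IsPathIn D ∧ R.IsRay ∧
    ∃ P, P.Infinite ∧ (∀ p ∈ P, IsTooth D B0 R p) ∧ PairwiseDisjointWalks P := Iff.rfl

lemma infinite_setOf_Ini_mem_support_drop (hR : R.IsRay) (hPinf : P.Infinite)
    (hPd : PairwiseDisjointWalks P) (hPR : ∀ p ∈ P, p.Ini ∈ R.support) (j₀ : ℕ) :
    {p ∈ P | p.Ini ∈ (R.drop j₀).support}.Infinite := by
  have hfin : {p ∈ P | p.Ini ∉ (R.drop j₀).support}.Finite := by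
    refine Finite.of_finite_image (f := DiWalk.Ini) (((finite_Iio j₀).image R.vtx).subset ?_) ?_
    · rintro _ ⟨p, ⟨hp, hpW⟩, rfl⟩
      obtain ⟨i, -, hi⟩ := hPR p hp
      refine ⟨i, mem_Iio.2 (lt_of_not_ge fun hij ↦ hpW ⟨i - j₀, le_len_of_isRay
        (isRay_drop.2 hR) _, ?_⟩), hi⟩
      rw [← hi]
      exact congrArg R.vtx (by omega)
    · exact fun p hp p' hp' he ↦ hPd.eq_of_mem_support hp.1 hp'.1 (Ini_mem_support p)
        (he ▸ Ini_mem_support p')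
  exact (hPinf.sdiff hfin).mono fun p hp ↦ ⟨hp.1, by_contra fun h ↦ hp.2 ⟨hp.1, h⟩⟩

lemma isSpine_of_isTooth_of_disjoint (hW : W.IsPathIn D) (hWr : W.IsRay) (hPinf : P.Infinite)
    (hPd : PairwiseDisjointWalks P)
    (hP : ∀ p ∈ P, IsTooth (shiftedDigraph D (ESet Q) (VSet Q)) (shiftedExits B0 Q) W p ∧
      Disjoint p.support (VSet Q)) :
    IsSpine D B0 W := by
  refine ⟨hW, hWr, P, hPinf, fun p hp ↦ ?_, hPd⟩
  obtain ⟨⟨hpp, hpr, hpl, hpW, hpB, hpW'⟩, hpQ⟩ := hP p hp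
  refine ⟨hpp.of_shiftedDigraph fun i hi ↦ hpQ.notMem_of_mem_left
    (vtx_mem_support (coe_le_len_of_add_one_le hi)), hpr, hpl, hpW, ?_, hpW'⟩
  rcases hpB with ⟨hpB, -⟩ | hpS
  exacts [hpB, absurd (IniSet_subset_VSet hpS) (hpQ.notMem_of_mem_left (Ter_mem_support hpr))]

lemma IsLinkage.isSpine_of_isTooth_of_nonempty (hQ : IsLinkage D B0 Q) (hW : W.IsPathIn D)
    (hWr : W.IsRay) (hWQ : Disjoint W.support (VSet Q)) (hPinf : P.Infinite)
    (hPd : PairwiseDisjointWalks P)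
    (hP : ∀ p ∈ P, IsTooth (shiftedDigraph D (ESet Q) (VSet Q)) (shiftedExits B0 Q) W p ∧
      (p.support ∩ VSet Q).Nonempty) :
    IsSpine D B0 W := by
  choose! m hm hmD hmQ using fun p hp ↦ (hP p hp).1.1.exists_take_of_shiftedDigraph (hP p hp).2
  have hsub : ∀ p ∈ P, (p.take (m p)).support ⊆ p.support :=
    fun p hp ↦ support_take_subset (hm p hp)
  refine hQ.isSpine_of_paths_to_VSet hW hWr hWQ (P := (fun p ↦ p.take (m p)) '' P)
    (hPinf.image ?_) ?_ ?_
  · intro p hp p' hp' he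
    have hIni : p.Ini = p'.Ini := by simpa using congrArg DiWalk.Ini he
    exact hPd.eq_of_mem_support hp hp' (Ini_mem_support p) (hIni ▸ Ini_mem_support p')
  · rintro _ ⟨p, hp, rfl⟩ _ ⟨p', hp', rfl⟩ hne
    exact (hPd p hp p' hp' fun h ↦ hne (h ▸ rfl)).mono (hsub p hp) (hsub p' hp')
  · rintro _ ⟨p, hp, rfl⟩
    obtain ⟨⟨-, -, -, hpW, -, hpW'⟩, -⟩ := hP p hp
    refine ⟨hmD p hp, not_isRay_take, subset_antisymm ?_ ?_, hmQ p hp⟩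
    · exact hpW' ▸ inter_subset_inter_left _ (hsub p hp)
    · exact singleton_subset_iff.2 ⟨Ini_mem_support _, hpW⟩

/-- The tail is a ray of `D`, and its teeth either avoid `V(Q)` or can be cut at `V(Q)` and
continued along `Q`. -/
lemma IsLinkage.exists_isSpine_of_shiftedDigraph (hQ : IsLinkage D B0 Q)
    (hR : IsSpine (shiftedDigraph D (ESet Q) (VSet Q)) (shiftedExits B0 Q) R) {j₀ : ℕ}
    (htail : ∀ k, R.vtx (j₀ + k) ∉ VSet Q) : ∃ W, IsSpine D B0 W := by
  obtain ⟨hRp, hRr, P, hPinf, hP, hPd⟩ := isSpine_iff.1 hR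
  set W := R.drop j₀
  have hWr : W.IsRay := isRay_drop.2 hRr
  have hWR : W.support ⊆ R.support := support_drop_subset (le_len_of_isRay hRr _)
  have hWQ : Disjoint W.support (VSet Q) := by
    rw [disjoint_left]
    rintro _ ⟨k, -, rfl⟩
    exact htail k
  have hW : W.IsPathIn D := (hRp.drop (le_len_of_isRay hRr _)).of_shiftedDigraph
    fun i _ ↦ hWQ.notMem_of_mem_left (vtx_mem_support (le_len_of_isRay hWr _))
  set P' := {p ∈ P | p.Ini ∈ W.support}
  have hP' : ∀ p ∈ P', IsTooth (shiftedDigraph D (ESet Q) (VSet Q))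
      (shiftedExits B0 Q) W p := by
    rintro p ⟨hp, hpW⟩
    obtain ⟨hpp, hpr, hpl, -, hpB, hpR⟩ := hP p hp
    refine ⟨hpp, hpr, hpl, hpW, hpB,
      subset_antisymm ?_ (singleton_subset_iff.2 ⟨Ini_mem_support p, hpW⟩)⟩
    exact hpR ▸ inter_subset_inter_right _ hWR
  have hP'inf : P'.Infinite :=
    infinite_setOf_Ini_mem_support_drop hRr hPinf hPd (fun p hp ↦ (hP p hp).2.2.2.1) j₀
  have hsplit : P' ⊆ {p ∈ P' | Disjoint p.support (VSet Q)} ∪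
      {p ∈ P' | (p.support ∩ VSet Q).Nonempty} := fun p hp ↦
    (disjoint_or_nonempty_inter p.support (VSet Q)).imp (⟨hp, ·⟩) (⟨hp, ·⟩)
  rcases infinite_union.1 (hP'inf.mono hsplit) with hA | hB
  · exact ⟨W, isSpine_of_isTooth_of_disjoint hW hWr hA (hPd.mono fun p hp ↦ hp.1.1)
      fun p hp ↦ ⟨hP' p hp.1, hp.2⟩⟩
  · exact ⟨W, hQ.isSpine_of_isTooth_of_nonempty hW hWr hWQ hB (hPd.mono fun p hp ↦ hp.1.1)
      fun p hp ↦ ⟨hP' p hp.1, hp.2⟩⟩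

end Shift

structure ShiftedSystem (V : Type*) where
  D : V → V → Prop
  B0 : Set V
  Q : Set (DiWalk V)
  P : Set (DiWalk V)
  isDimaze : IsDimaze D B0
  isLinkage : IsLinkage D B0 Q
  isPathSystem : IsPathSystem (shiftedDigraph D (ESet Q) (VSet Q)) P
  Ter_mem : ∀ p ∈ P, ¬ p.IsRay → p.Ter ∈ shiftedExits B0 Q

namespace ShiftedSystem

variable (C : ShiftedSystem V) {p : DiWalk V} {a b c s t u v x y : V} {n : ℕ}

/-! Composing `P` with `Q` gives a system of paths of `D`: an edge `(x, u)` of `Q` is kept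
unless `P` leaves `u`, and a step `a → u` of `P` along a shifted edge is replaced by the edge
`(x, u)` of `D` it comes from, where `a = Q⃗(x)`. A vertex of `Q` may be left unless `P` enters
it along a reversed edge of `Q`; any other vertex may be left if `P` leaves it. -/

def MayLeave (v : V) : Prop :=
  (v ∈ VSet C.Q ∧ ¬ ∃ a, (a, v) ∈ ESet C.P ∧ (v, a) ∈ ESet C.Q) ∨
    (v ∉ VSet C.Q ∧ ∃ u, (v, u) ∈ ESet C.P)

def Adj (x u : V) : Prop :=
  ((x, u) ∈ ESet C.Q ∧ ¬ ∃ w, (u, w) ∈ ESet C.P) ∨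
    (C.D x u ∧ (x, u) ∉ ESet C.Q ∧ ∃ a, (a, u) ∈ ESet C.P ∧ (u, a) ∉ ESet C.Q ∧
      ((x ∉ VSet C.Q ∧ a = x) ∨ (x, a) ∈ ESet C.Q))

def IsSource (a : V) : Prop := ¬ ∃ x, C.Adj x a

lemma TerSet_subset : TerSet C.P ⊆ shiftedExits C.B0 C.Q := by
  rintro _ ⟨p, hp, hpr, rfl⟩
  exact C.Ter_mem p hp hpr

lemma D_of_adj (h : C.Adj x u) : C.D x u := by
  rcases h with ⟨h, -⟩ | ⟨h, -⟩
  exacts [C.isLinkage.1.adj_of_mem_ESet h, h]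

lemma notMem_TerSet_of_mem_ESet_Q (hxu : (x, u) ∈ ESet C.Q) : u ∉ TerSet C.P := fun hu ↦ by
  rcases C.TerSet_subset hu with ⟨huB, huT⟩ | huS
  · exact huT (C.isLinkage.mem_TerSet_of_mem C.isDimaze (snd_mem_VSet hxu) huB)
  · exact C.isLinkage.1.snd_notMem_IniSet hxu huS

lemma notMem_ESet_of_mem_ESet_Q (hxu : (x, u) ∈ ESet C.Q) (hu : ¬ ∃ w, (u, w) ∈ ESet C.P) :
    (a, u) ∉ ESet C.P :=
  fun hau ↦ C.notMem_TerSet_of_mem_ESet_Q hxu (mem_TerSet_of_mem_ESet hau hu)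

lemma mem_ESet_of_adj_of_notMem (h : C.Adj x u) (hx : x ∉ VSet C.Q) : (x, u) ∈ ESet C.P := by
  rcases h with ⟨h, -⟩ | ⟨-, -, a, hau, -, ⟨-, rfl⟩ | hxa⟩
  exacts [absurd (fst_mem_VSet h) hx, hau, absurd (fst_mem_VSet hxa) hx]

lemma adj_right_unique (h : C.Adj x u) (h' : C.Adj x v) : u = v := by
  have hQ := C.isLinkage.1
  rcases h with ⟨hxu, hu⟩ | ⟨-, -, a, hau, -, ⟨hx, rfl⟩ | hxa⟩ <;>
    rcases h' with ⟨hxv, hv⟩ | ⟨-, -, a', hav, -, ⟨hx', rfl⟩ | hxa'⟩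
  · exact hQ.snd_eq_of_mem_ESet hxu hxv
  · exact absurd (fst_mem_VSet hxu) hx'
  · exact absurd ⟨v, hQ.snd_eq_of_mem_ESet hxa' hxu ▸ hav⟩ hu
  · exact absurd (fst_mem_VSet hxv) hx
  · exact C.isPathSystem.snd_eq_of_mem_ESet hau hav
  · exact absurd (fst_mem_VSet hxa') hx
  · exact absurd ⟨u, hQ.snd_eq_of_mem_ESet hxa hxv ▸ hau⟩ hv
  · exact absurd (fst_mem_VSet hxa) hx'
  · exact C.isPathSystem.snd_eq_of_mem_ESet hau (hQ.snd_eq_of_mem_ESet hxa' hxa ▸ hav)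

lemma adj_left_unique (h : C.Adj x u) (h' : C.Adj y u) : x = y := by
  have hQ := C.isLinkage.1
  rcases h with ⟨hxu, hu⟩ | ⟨-, -, a, hau, -, hxa⟩
  · rcases h' with ⟨hyu, -⟩ | ⟨-, -, a', hau', -⟩
    exacts [hQ.fst_eq_of_mem_ESet hxu hyu, absurd hau' (C.notMem_ESet_of_mem_ESet_Q hxu hu)]
  rcases h' with ⟨hyu, hu⟩ | ⟨-, -, a', hau', -, hya'⟩
  · exact absurd hau (C.notMem_ESet_of_mem_ESet_Q hyu hu)
  obtain rfl := C.isPathSystem.fst_eq_of_mem_ESet hau hau'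
  rcases hxa with ⟨hx, rfl⟩ | hxa <;> rcases hya' with ⟨hy, rfl⟩ | hya
  · rfl
  · exact absurd (snd_mem_VSet hya) hx
  · exact absurd (snd_mem_VSet hxa) hy
  · exact hQ.fst_eq_of_mem_ESet hxa hya

lemma exists_adj_of_mem_ESet (hbc : (b, c) ∈ ESet C.P) (hcb : (c, b) ∉ ESet C.Q) :
    ∃ x, C.Adj x c ∧ ((x ∉ VSet C.Q ∧ b = x) ∨ (x, b) ∈ ESet C.Q) := by
  rcases C.isPathSystem.adj_of_mem_ESet hbc with h | ⟨x, hxc, hxcQ, hx⟩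
  · exact absurd h hcb
  · exact ⟨x, .inr ⟨hxc, hxcQ, b, hbc, hcb, hx⟩, hx⟩

lemma isSource_Ini (hp : p ∈ C.P) : C.IsSource p.Ini := by
  rintro ⟨x, ⟨hx, hout⟩ | ⟨-, -, b, hb, -⟩⟩
  · exact C.notMem_TerSet_of_mem_ESet_Q hx (Ini_mem_TerSet hp hout)
  · exact C.isPathSystem.snd_notMem_IniSet hb ⟨p, hp, rfl⟩

lemma mayLeave_Ini (hp : p ∈ C.P) (h : ∃ c, (p.Ini, c) ∈ ESet C.P) : C.MayLeave p.Ini := by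
  by_cases hpQ : p.Ini ∈ VSet C.Q
  · exact .inl ⟨hpQ, fun ⟨b, hb, _⟩ ↦ C.isPathSystem.snd_notMem_IniSet hb ⟨p, hp, rfl⟩⟩
  · exact .inr ⟨hpQ, h⟩

lemma mem_B0_of_not_mayLeave_Ini (hp : p ∈ C.P) (h : ¬ C.MayLeave p.Ini) : p.Ini ∈ C.B0 := by
  have hpQ : p.Ini ∉ VSet C.Q := fun hpQ ↦
    h (.inl ⟨hpQ, fun ⟨b, hb, _⟩ ↦ C.isPathSystem.snd_notMem_IniSet hb ⟨p, hp, rfl⟩⟩)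
  rcases C.TerSet_subset (Ini_mem_TerSet hp fun hout ↦ h (.inr ⟨hpQ, hout⟩)) with hB | hS
  exacts [hB.1, absurd (IniSet_subset_VSet hS) hpQ]

lemma isSource_of_mem_IniSet (hs : s ∈ IniSet C.Q) (hsP : s ∉ TerSet C.P) :
    C.IsSource s ∧ C.MayLeave s := by
  have hin : ¬ ∃ b, (b, s) ∈ ESet C.P := fun ⟨b, hb⟩ ↦ hsP <| mem_TerSet_of_mem_ESet hb
    fun ⟨c, hc⟩ ↦ not_shiftedDigraph_of_mem_IniSet C.isLinkage.1 hs
      (C.isPathSystem.adj_of_mem_ESet hc)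
  refine ⟨?_, .inl ⟨IniSet_subset_VSet hs, fun ⟨b, hb, _⟩ ↦ hin ⟨b, hb⟩⟩⟩
  rintro ⟨x, ⟨hx, -⟩ | ⟨-, -, b, hb, -⟩⟩
  exacts [C.isLinkage.1.snd_notMem_IniSet hx hs, hin ⟨b, hb⟩]

lemma mem_TerSet_of_mayLeave (ht : C.MayLeave t) (hno : ¬ ∃ u, C.Adj t u) :
    t ∈ TerSet C.Q := by
  have hQ := C.isLinkage
  rcases ht with ⟨htQ, hnoI⟩ | ⟨htQ, c, htc⟩
  · by_contra htT
    obtain ⟨b, htb⟩ := hQ.exists_mem_ESet htQ htT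
    obtain ⟨c, hbc⟩ : ∃ c, (b, c) ∈ ESet C.P := by
      by_contra hb
      exact hno ⟨b, .inl ⟨htb, hb⟩⟩
    by_cases hcb : (c, b) ∈ ESet C.Q
    · obtain rfl := hQ.1.fst_eq_of_mem_ESet hcb htb
      exact hnoI ⟨b, hbc, htb⟩
    obtain ⟨x, hxc, ⟨hx, rfl⟩ | hxb⟩ := C.exists_adj_of_mem_ESet hbc hcb
    · exact hx (snd_mem_VSet htb)
    · exact hno ⟨c, hQ.1.fst_eq_of_mem_ESet hxb htb ▸ hxc⟩
  · have hct : (c, t) ∉ ESet C.Q := fun hct ↦ htQ (snd_mem_VSet hct)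
    obtain ⟨x, hxc, ⟨-, rfl⟩ | hxt⟩ := C.exists_adj_of_mem_ESet htc hct
    exacts [absurd ⟨c, hxc⟩ hno, absurd (snd_mem_VSet hxt) htQ]

lemma mem_of_not_mayLeave (hxt : C.Adj x t) (ht : ¬ C.MayLeave t) :
    t ∈ (C.B0 \ TerSet C.Q) ∩ TerSet C.P := by
  have hin : t ∈ VSet C.Q → ∃ b, (b, t) ∈ ESet C.P ∧ (t, b) ∈ ESet C.Q := fun htQ ↦
    by_contra fun h ↦ ht (.inl ⟨htQ, h⟩)
  rcases hxt with ⟨hxt, hout⟩ | ⟨-, -, a, hat, hta, -⟩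
  · obtain ⟨b, hbt, -⟩ := hin (snd_mem_VSet hxt)
    exact absurd hbt (C.notMem_ESet_of_mem_ESet_Q hxt hout)
  by_cases htQ : t ∈ VSet C.Q
  · obtain ⟨b, hbt, htb⟩ := hin htQ
    exact absurd (C.isPathSystem.fst_eq_of_mem_ESet hat hbt ▸ htb) hta
  have htP : t ∈ TerSet C.P := mem_TerSet_of_mem_ESet hat fun hout ↦ ht (.inr ⟨htQ, hout⟩)
  rcases C.TerSet_subset htP with htB | htS
  exacts [⟨htB, htP⟩, absurd (IniSet_subset_VSet htS) htQ]

open Classical in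
noncomputable def next (v : V) : Option V :=
  if h : C.MayLeave v ∧ ∃ u, C.Adj v u then some h.2.choose else none

lemma next_eq_some_iff : C.next v = some u ↔ C.MayLeave v ∧ C.Adj v u := by
  unfold next
  split_ifs with h
  · rw [Option.some_inj]
    exact ⟨fun he ↦ he ▸ ⟨h.1, h.2.choose_spec⟩, fun hu ↦ C.adj_right_unique h.2.choose_spec hu.2⟩
  · exact ⟨fun he ↦ absurd he (by simp), fun hu ↦ absurd ⟨hu.1, u, hu.2⟩ h⟩

noncomputable def orbit (a : V) : ℕ → Option V
  | 0 => some a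
  | n + 1 => (orbit a n).bind C.next

open Classical in
noncomputable def trajLen (a : V) : ℕ∞ :=
  if h : ∃ n, C.orbit a (n + 1) = none then Nat.find h else ⊤

noncomputable def traj (a : V) : DiWalk V := ⟨fun n ↦ (C.orbit a n).getD a, C.trajLen a⟩

lemma orbit_succ_eq_some :
    C.orbit a (n + 1) = some u ↔ ∃ v, C.orbit a n = some v ∧ C.next v = some u :=
  Option.bind_eq_some_iff

lemma orbit_eq_none_of_le {m : ℕ} (h : C.orbit a n = none) (hnm : n ≤ m) :
    C.orbit a m = none := by
  induction m, hnm using Nat.le_induction with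
  | base => exact h
  | succ m _ ih => simp [orbit, ih]

lemma orbit_ne_none_iff : C.orbit a n ≠ none ↔ (n : ℕ∞) ≤ (C.traj a).len := by
  classical
  change _ ↔ _ ≤ C.trajLen a
  unfold trajLen
  split_ifs with h
  · rw [Nat.cast_le]
    refine ⟨fun hn ↦ by_contra fun hlt ↦ hn ?_, fun hn ↦ ?_⟩
    · exact C.orbit_eq_none_of_le (Nat.find_spec h) (by omega)
    · cases n with
      | zero => simp [orbit]
      | succ k => exact Nat.find_min h (by omega)
  · push Not at h
    simp only [le_top, iff_true]
    cases n with
    | zero => simp [orbit]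
    | succ k => exact h k

lemma orbit_eq_some_vtx (h : (n : ℕ∞) ≤ (C.traj a).len) :
    C.orbit a n = some ((C.traj a).vtx n) := by
  obtain ⟨v, hv⟩ := Option.ne_none_iff_exists'.1 (C.orbit_ne_none_iff.2 h)
  simp [traj, hv]

@[simp] lemma Ini_traj : (C.traj a).Ini = a := rfl

lemma mem_support_traj : v ∈ (C.traj a).support ↔ ∃ n, C.orbit a n = some v := by
  constructor
  · rintro ⟨n, hn, rfl⟩
    exact ⟨n, C.orbit_eq_some_vtx hn⟩
  · rintro ⟨n, hn⟩
    have hle := (C.orbit_ne_none_iff (a := a) (n := n)).1 (by simp [hn])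
    rw [C.orbit_eq_some_vtx hle, Option.some_inj] at hn
    exact ⟨n, hle, hn⟩

lemma next_vtx_traj (h : (n : ℕ∞) + 1 ≤ (C.traj a).len) :
    C.next ((C.traj a).vtx n) = some ((C.traj a).vtx (n + 1)) := by
  obtain ⟨v, hv, hnext⟩ :=
    C.orbit_succ_eq_some.1 (C.orbit_eq_some_vtx (coe_succ_le_len_of_add_one_le h))
  rwa [C.orbit_eq_some_vtx (coe_le_len_of_add_one_le h), Option.some_inj, ← hv] at *

lemma adj_traj (h : (n : ℕ∞) + 1 ≤ (C.traj a).len) :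
    C.Adj ((C.traj a).vtx n) ((C.traj a).vtx (n + 1)) :=
  (C.next_eq_some_iff.1 (C.next_vtx_traj h)).2

lemma not_adj_Ter_traj (h : ¬ (C.traj a).IsRay) (hTer : C.MayLeave (C.traj a).Ter) :
    ¬ ∃ u, C.Adj (C.traj a).Ter u := by
  rintro ⟨u, hu⟩
  have hsucc : C.orbit a ((C.traj a).len.toNat + 1) = some u :=
    C.orbit_succ_eq_some.2 ⟨_, C.orbit_eq_some_vtx (coe_toNat_len h).le,
      C.next_eq_some_iff.2 ⟨hTer, hu⟩⟩
  have := (C.orbit_ne_none_iff (a := a) (n := (C.traj a).len.toNat + 1)).1 (by simp [hsucc])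
  rw [coe_le_len_iff h] at this
  omega

lemma orbit_inj (ha : C.IsSource a) (hb : C.IsSource b) :
    ∀ {i j : ℕ} {v : V}, C.orbit a i = some v → C.orbit b j = some v → a = b ∧ i = j
  | 0, 0, _, h, h' => ⟨Option.some_inj.1 (h.trans h'.symm), rfl⟩
  | 0, _ + 1, _, h, h' => by
    obtain ⟨w, -, hw⟩ := C.orbit_succ_eq_some.1 h'
    cases h
    exact absurd ⟨w, (C.next_eq_some_iff.1 hw).2⟩ ha
  | _ + 1, 0, _, h, h' => by
    obtain ⟨w, -, hw⟩ := C.orbit_succ_eq_some.1 h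
    cases h'
    exact absurd ⟨w, (C.next_eq_some_iff.1 hw).2⟩ hb
  | _ + 1, _ + 1, _, h, h' => by
    obtain ⟨w, hw, hwv⟩ := C.orbit_succ_eq_some.1 h
    obtain ⟨w', hw', hw'v⟩ := C.orbit_succ_eq_some.1 h'
    obtain rfl := C.adj_left_unique (C.next_eq_some_iff.1 hwv).2 (C.next_eq_some_iff.1 hw'v).2
    obtain ⟨rfl, rfl⟩ := orbit_inj ha hb hw hw'
    exact ⟨rfl, rfl⟩

lemma traj_isPathIn (ha : C.IsSource a) : (C.traj a).IsPathIn C.D :=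
  ⟨fun _ hi ↦ C.D_of_adj (C.adj_traj hi), fun _ _ hi hj he ↦
    (C.orbit_inj ha ha (C.orbit_eq_some_vtx hi) (he ▸ C.orbit_eq_some_vtx hj)).2⟩

lemma disjoint_support_traj (ha : C.IsSource a) (hb : C.IsSource b) (hab : a ≠ b) :
    Disjoint (C.traj a).support (C.traj b).support := by
  refine disjoint_left.2 fun v hv hv' ↦ hab ?_
  obtain ⟨i, hi⟩ := C.mem_support_traj.1 hv
  obtain ⟨j, hj⟩ := C.mem_support_traj.1 hv'
  exact (C.orbit_inj ha hb hi hj).1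

lemma isLinkage_image_traj {A B : Set V}
    (hA : ∀ a ∈ A, C.IsSource a ∧ ¬ (C.traj a).IsRay ∧ (C.traj a).Ter ∈ B) :
    IsLinkage C.D B (C.traj '' A) := by
  refine ⟨⟨?_, ?_⟩, ?_⟩
  · rintro _ ⟨a, ha, rfl⟩
    exact C.traj_isPathIn (hA a ha).1
  · rintro _ ⟨a, ha, rfl⟩ _ ⟨b, hb, rfl⟩ hne
    exact C.disjoint_support_traj (hA a ha).1 (hA b hb).1 fun h ↦ hne (h ▸ rfl)
  · rintro _ ⟨a, ha, rfl⟩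
    exact (hA a ha).2

lemma IniSet_image_traj (A : Set V) : IniSet (C.traj '' A) = A := by
  simp [IniSet, image_image]

lemma Ter_traj_mem (h : ¬ (C.traj a).IsRay) :
    (C.traj a).Ter ∈ TerSet C.Q ∪ (C.B0 \ TerSet C.Q) ∩ TerSet C.P ∨
      ((C.traj a).Ter = a ∧ ¬ C.MayLeave a) := by
  by_cases hTer : C.MayLeave (C.traj a).Ter
  · exact .inl (.inl (C.mem_TerSet_of_mayLeave hTer (C.not_adj_Ter_traj h hTer)))
  obtain ⟨n, hn⟩ := exists_len_eq_coe h
  have hTer_eq : (C.traj a).Ter = (C.traj a).vtx n := by simp [Ter, hn]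
  cases n with
  | zero =>
    have hTer_eq : (C.traj a).Ter = a := hTer_eq
    exact .inr ⟨hTer_eq, hTer_eq ▸ hTer⟩
  | succ n =>
    have hadj := C.adj_traj (n := n) (by rw [hn]; norm_cast)
    rw [← hTer_eq] at hadj
    exact .inl (.inr (C.mem_of_not_mayLeave hadj hTer))

lemma exists_isRay_of_isRay_traj (hCO : COFree C.D C.B0) (ha : C.IsSource a)
    (h : (C.traj a).IsRay) : ∃ p ∈ C.P, p.IsRay ∧ ∃ j₀, ∀ k, p.vtx (j₀ + k) ∉ VSet C.Q := by
  have hW := C.traj_isPathIn ha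
  have hfin : {q ∈ C.Q | (q.support ∩ (C.traj a).support).Nonempty}.Finite :=
    not_infinite.1 fun hinf ↦ hCO ⟨_, C.isLinkage.isSpine_of_infinite C.isDimaze hW h hinf⟩
  obtain ⟨N, hN⟩ :=
    exists_forall_vtx_add_notMem_VSet (fun q hq ↦ C.isLinkage.not_isRay hq) hW h hfin
  obtain ⟨p, hp, hpr, j₀, hj₀⟩ := C.isPathSystem.exists_isRay_of_mem_ESet
    (f := fun k ↦ (C.traj a).vtx (N + k))
    fun k ↦ C.mem_ESet_of_adj_of_notMem (C.adj_traj (le_len_of_isRay h _)) (hN k)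
  exact ⟨p, hp, hpr, j₀, fun k ↦ (hj₀ k).symm ▸ hN k⟩

lemma Ter_traj_mem_TerSet (hCO : COFree C.D C.B0)
    (hP : ∀ p ∈ C.P, p.IsRay ∧ ¬ ∃ j₀, ∀ k, p.vtx (j₀ + k) ∉ VSet C.Q) (ha : C.IsSource a)
    (ha' : C.MayLeave a) : ¬ (C.traj a).IsRay ∧ (C.traj a).Ter ∈ TerSet C.Q := by
  have hfin : ¬ (C.traj a).IsRay := fun hr ↦ by
    obtain ⟨p, hp, -, hp'⟩ := C.exists_isRay_of_isRay_traj hCO ha hr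
    exact (hP p hp).2 hp'
  refine ⟨hfin, ?_⟩
  rcases C.Ter_traj_mem hfin with (hT | ⟨-, q, hq, hqr, -⟩) | ⟨-, hnot⟩
  exacts [hT, absurd (hP q hq).1 hqr, absurd ha' hnot]

theorem linkable_IniSet (hCO : COFree C.D C.B0) (hP : ∀ p ∈ C.P, ¬ p.IsRay) :
    Linkable C.D C.B0 (IniSet C.P) := by
  refine ⟨C.traj '' IniSet C.P, C.isLinkage_image_traj ?_, C.IniSet_image_traj _⟩
  rintro _ ⟨p, hp, rfl⟩
  have hsrc := C.isSource_Ini hp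
  have hfin : ¬ (C.traj p.Ini).IsRay := fun hr ↦ by
    obtain ⟨q, hq, hqr, -⟩ := C.exists_isRay_of_isRay_traj hCO hsrc hr
    exact hP q hq hqr
  refine ⟨hsrc, hfin, ?_⟩
  rcases C.Ter_traj_mem hfin with (hT | hB) | ⟨he, hp'⟩
  · exact C.isLinkage.TerSet_subset hT
  · exact hB.1.1
  · rw [he]
    exact C.mem_B0_of_not_mayLeave_Ini hp hp'

end ShiftedSystem

section Shifting

variable {D : V → V → Prop} {B0 : Set V} {Q : Set (DiWalk V)}

theorem Linkable.of_shift (hDim : IsDimaze D B0) (hQ : IsLinkage D B0 Q) (hCO : COFree D B0)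
    {I : Set V}
    (h : Linkable (shiftedDigraph D (ESet Q) (VSet Q)) (shiftedExits B0 Q) I) :
    Linkable D B0 I := by
  obtain ⟨P, ⟨hP, hPB⟩, rfl⟩ := h
  exact ShiftedSystem.linkable_IniSet ⟨D, B0, Q, P, hDim, hQ, hP, fun p hp _ ↦ (hPB p hp).2⟩ hCO
    fun p hp ↦ (hPB p hp).1

theorem COFree.shift (hDim : IsDimaze D B0) (hQ : IsLinkage D B0 Q) (hCO : COFree D B0)
    (hmin : ¬ ∃ Q', IsLinkage D B0 Q' ∧ IniSet Q' = IniSet Q ∧ TerSet Q' ⊂ TerSet Q) :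
    COFree (shiftedDigraph D (ESet Q) (VSet Q)) (shiftedExits B0 Q) := by
  rintro ⟨R, hR⟩
  let C : ShiftedSystem V := ⟨D, B0, Q, {R}, hDim, hQ,
    ⟨by simpa using hR.1, by simp [PairwiseDisjointWalks]⟩,
    fun p hp hpr ↦ absurd (mem_singleton_iff.1 hp ▸ hR.2.1) hpr⟩
  have hR₀ : (R.Ini, R.vtx 1) ∈ ESet C.P :=
    mem_ESet_of_mem (mem_singleton R) (le_len_of_isRay hR.2.1 _)
  have hRS : R.Ini ∉ IniSet Q := fun h ↦
    not_shiftedDigraph_of_mem_IniSet hQ.1 h (C.isPathSystem.adj_of_mem_ESet hR₀)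
  have hsrc : ∀ a ∈ insert R.Ini (IniSet Q), C.IsSource a ∧ C.MayLeave a := by
    rintro a (rfl | ha)
    · exact ⟨C.isSource_Ini (mem_singleton R), C.mayLeave_Ini (mem_singleton R) ⟨_, hR₀⟩⟩
    · refine C.isSource_of_mem_IniSet ha fun ⟨p, hp, hpr, _⟩ ↦ hpr ?_
      exact mem_singleton_iff.1 hp ▸ hR.2.1
  have htraj : ∀ a ∈ insert R.Ini (IniSet Q), ¬ (C.traj a).IsRay ∧ (C.traj a).Ter ∈ TerSet Q :=
    fun a ha ↦ C.Ter_traj_mem_TerSet hCO (fun p hp ↦ mem_singleton_iff.1 hp ▸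
      ⟨hR.2.1, fun ⟨j₀, hj₀⟩ ↦ hCO (hQ.exists_isSpine_of_shiftedDigraph hR hj₀)⟩)
      (hsrc a ha).1 (hsrc a ha).2
  have hS : ∀ a ∈ IniSet Q, a ∈ insert R.Ini (IniSet Q) := fun a ↦ mem_insert_of_mem _
  refine hmin ⟨C.traj '' IniSet Q, C.isLinkage_image_traj fun a ha ↦
    ⟨(hsrc a (hS a ha)).1, (htraj a (hS a ha)).1, hQ.TerSet_subset (htraj a (hS a ha)).2⟩,
    C.IniSet_image_traj _, (ssubset_iff_of_subset ?_).2 ⟨_, (htraj R.Ini (mem_insert _ _)).2, ?_⟩⟩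
  · rintro _ ⟨_, ⟨a, ha, rfl⟩, -, rfl⟩
    exact (htraj a (hS a ha)).2
  · rintro ⟨_, ⟨a, ha, rfl⟩, -, he⟩
    refine (C.disjoint_support_traj (hsrc a (hS a ha)).1 (hsrc R.Ini (mem_insert _ _)).1
      fun h ↦ hRS (h ▸ ha)).notMem_of_mem_left (Ter_mem_support (htraj a (hS a ha)).1) ?_
    exact he ▸ Ter_mem_support (htraj R.Ini (mem_insert _ _)).1

end Shifting

theorem shifted_dimaze_same_gammoid_general {V : Type*} (D : V → V → Prop) (B0 : Set V)
    (hDim : IsDimaze D B0) (hCO : COFree D B0)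
    (Q : Set (DiWalk V)) (S T : Set V) (hQ : IsLinkage D B0 Q)
    (hS : IniSet Q = S) (hT : TerSet Q = T)
    (hmin : ¬ ∃ Q', IsLinkage D B0 Q' ∧ IniSet Q' = S ∧ TerSet Q' ⊂ T) :
    ∀ I, Linkable D B0 I ↔
      Linkable (shiftedDigraph D (ESet Q) (VSet Q)) ((B0 \ T) ∪ S) I := by
  subst hS hT
  refine fun I ↦ ⟨fun h ↦ ?_, Linkable.of_shift hDim hQ hCO⟩
  have h' := Linkable.of_shift (hDim.shift hQ) hQ.image_reverse (hCO.shift hDim hQ hmin) (I := I)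
  rw [shiftedExits_reverse hDim hQ] at h'
  exact h' (h.mono_of_ne fun a u hau ↦ (shiftedDigraph_reverse_iff hDim hQ hau).2)

theorem shifted_dimaze_same_gammoid {V : Type*} (D : V → V → Prop) (B0 : Set V)
    (hDim : IsDimaze D B0) (M : Matroid V) (hE : M.E = Set.univ)
    (hInd : ∀ I, M.Indep I ↔ Linkable D B0 I) (hCO : COFree D B0)
    (Q : Set (DiWalk V)) (S T : Set V) (hQ : IsLinkage D B0 Q)
    (hS : IniSet Q = S) (hT : TerSet Q = T)
    (hmin : ¬ ∃ Q', IsLinkage D B0 Q' ∧ IniSet Q' = S ∧ TerSet Q' ⊂ T) :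
    ∀ I, Linkable D B0 I ↔
      Linkable (shiftedDigraph D (ESet Q) (VSet Q)) ((B0 \ T) ∪ S) I :=
  shifted_dimaze_same_gammoid_general D B0 hDim hCO Q S T hQ hS hT hmin
end
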